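/- arXiv:1502.02240 — 4 statements merged into one kernel-verified Lean document; each statement's English description precedes it below -/
import Mathlib

section
/- Let K be a field of positive characteristic and let γ be a discrete norm on K. Let U ≤ GL_n(K) denote the group of unipotent upper triangular matrices. Then the family {F\GL_n(K)}_F, where F ranges over all finite subgroups of U, has finite asymptotic dimension uniformly with respect to the pseudometric associated to γ. -/
open Matrix

/-- `d` is a pseudometric on `X`. -/
structure IsPseudoMetric {X : Type} (d : X → X → ℝ) : Prop where
  nonneg : ∀ x y, 0 ≤ d x y
  refl : ∀ x, d x x = 0
  symm : ∀ x y, d x y = d y x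
  triangle : ∀ x y z, d x z ≤ d x y + d y z

/-- A (pseudo)metric on a group is left-invariant if left translations are isometries. -/
def IsLeftInvariant {G : Type} [Group G] (d : G → G → ℝ) : Prop :=
  ∀ g x y : G, d (g * x) (g * y) = d x y

/-- A (pseudo)metric is proper if all balls are finite. -/
def IsProper {X : Type} (d : X → X → ℝ) : Prop :=
  ∀ (x : X) (R : ℝ), {y : X | d x y ≤ R}.Finite

/-- The quotient pseudometric on `F\G`, realized as the pseudometric
`d(Fg, Fg') = inf_{f ∈ F} d(f*g, g')` on `G` itself. -/
noncomputable def quotDist {G : Type} [Group G] (d : G → G → ℝ) (F : Subgroup G)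
    (x y : G) : ℝ :=
  ⨅ f : F, d ((f : G) * x) y

/-- A family of (pseudo)metric spaces `{(X i, d i)}` has asymptotic dimension at most `n`
uniformly: for every `r > 0` there is a uniform bound `B` such that every `X i` is covered
by `n+1` collections of subsets, each collection `r`-disjoint, all members of diameter
at most `B`. -/
def UniformAsdimLE {ι : Type} (X : ι → Type) (d : ∀ i, X i → X i → ℝ) (n : ℕ) : Prop :=
  ∀ r : ℝ, 0 < r → ∃ B : ℝ, ∀ i : ι,
    ∃ 𝒰 : Fin (n + 1) → Set (Set (X i)),
      (∀ x : X i, ∃ k, ∃ U ∈ 𝒰 k, x ∈ U) ∧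
      (∀ k, ∀ U ∈ 𝒰 k, ∀ V ∈ 𝒰 k, U ≠ V → ∀ x ∈ U, ∀ y ∈ V, r < d i x y) ∧
      (∀ k, ∀ U ∈ 𝒰 k, ∀ x ∈ U, ∀ y ∈ U, d i x y ≤ B)

/-- A family of (pseudo)metric spaces has finite asymptotic dimension uniformly. -/
def UniformFinAsdim {ι : Type} (X : ι → Type) (d : ∀ i, X i → X i → ℝ) : Prop :=
  ∃ n : ℕ, UniformAsdimLE X d n

/-- A discrete norm on a field `K`: multiplicative, ultrametric, vanishing exactly at `0`,
whose range on `K \ {0}` is a discrete subgroup of the multiplicative group `(0,∞)`. -/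
structure IsDiscreteNorm {K : Type} [Field K] (γ : K → ℝ) : Prop where
  nonneg : ∀ x, 0 ≤ γ x
  eq_zero_iff : ∀ x, γ x = 0 ↔ x = 0
  map_mul : ∀ x y, γ (x * y) = γ x * γ y
  ultrametric : ∀ x y, γ (x + y) ≤ max (γ x) (γ y)
  discrete : DiscreteTopology {r : ℝ // ∃ x : K, x ≠ 0 ∧ γ x = r}

/-- The length function `l_γ(g) = log max_{i,j} {γ(g_{ij}), γ(g^{ij})}` on `GL_n(K)`
associated to a norm `γ`, where `g_{ij}` and `g^{ij}` are the matrix coefficients of `g`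
and `g⁻¹` respectively. -/
noncomputable def normLength {K : Type} [Field K] (γ : K → ℝ) {n : ℕ}
    (g : GL (Fin n) K) : ℝ :=
  Real.log (⨆ p : Fin n × Fin n,
    max (γ ((g : Matrix (Fin n) (Fin n) K) p.1 p.2))
        (γ (((g⁻¹ : GL (Fin n) K) : Matrix (Fin n) (Fin n) K) p.1 p.2)))

/-- The pseudometric `d_γ(x,y) = l_γ(x⁻¹y)` on `GL_n(K)` associated to a norm `γ`. -/
noncomputable def normDist {K : Type} [Field K] (γ : K → ℝ) {n : ℕ}
    (x y : GL (Fin n) K) : ℝ :=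
  normLength γ (x⁻¹ * y)


/-!
Write every `g ∈ GL_n(K)` as `g = b k⁻¹` with `b` upper triangular and `k ∈ GL_n(𝒪)` (column
reduction, always pivoting on an entry of maximal norm), and put `Φ(g) = (log γ(b_ii))_i`.
Comparing the decompositions of `x` and `f x` through `b_x⁻¹ f⁻¹ b_y = k_x⁻¹ (x⁻¹ f⁻¹ y) k_y` shows
that each coordinate of `Φ` is `1`-Lipschitz for the pseudometric on `F\GL_n(K)`. Cover `ℝⁿ` by
cubes of side `r`, coloured by the parities of their integer coordinates, and split the preimage of
each cube into its `r`-chain components: cubes of the same colour are more than `r` apart, giving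
`2ⁿ` families of `r`-disjoint sets. Along an `r`-chain inside one cube starting at `x`, the matrices
`P = b_x⁻¹ φ b_y` (`φ ∈ F`) have diagonal entries of norm within `e^{±r}` and each step multiplies
`P` on the right by an upper triangular matrix with entries of norm `≤ e^r`; by the ultrametric
inequality the bound `γ(P_ij) ≤ e^{3r(j-i)} γ(P_jj)` survives every step. Hence the entries of `P`,
and through the adjugate those of `P⁻¹`, are bounded in terms of `n` and `r` only, and so is the
diameter of each component.
-/

namespace IsDiscreteNorm

variable {K : Type} [Field K] {γ : K → ℝ}

def toAbsoluteValue (hγ : IsDiscreteNorm γ) : AbsoluteValue K ℝ where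
  toFun := γ
  map_mul' := hγ.map_mul
  nonneg' := hγ.nonneg
  eq_zero' := hγ.eq_zero_iff
  add_le' _ _ := IsNonarchimedean.add_le hγ.nonneg hγ.ultrametric

theorem isNonarchimedean (hγ : IsDiscreteNorm γ) : IsNonarchimedean hγ.toAbsoluteValue :=
  hγ.ultrametric

end IsDiscreteNorm

section Cubes

variable {X : Type*} {n : ℕ}

def cube (Φ : X → Fin n → ℝ) (s : ℝ) (m : Fin n → ℤ) : Set X :=
  {x | ∀ k, ⌊Φ x k / s⌋ = m k}

def CubeStep (d : X → X → ℝ) (Φ : X → Fin n → ℝ) (s : ℝ) (m : Fin n → ℤ) (x y : X) : Prop :=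
  x ∈ cube Φ s m ∧ y ∈ cube Φ s m ∧ d x y ≤ s

variable {d : X → X → ℝ} {Φ : X → Fin n → ℝ} {s : ℝ} {m : Fin n → ℤ}

theorem sub_lt_of_mem_cube (hs : 0 < s) {x y : X} (hx : x ∈ cube Φ s m) (hy : y ∈ cube Φ s m)
    (k : Fin n) : Φ y k - Φ x k < s := by
  have hxk := Int.floor_eq_iff.1 (hx k)
  have hyk := Int.floor_eq_iff.1 (hy k)
  have : Φ y k / s - Φ x k / s < 1 := by linarith
  rwa [← sub_div, div_lt_one hs] at this

theorem lt_sub_of_floor_add_two_le (hs : 0 < s) {a b : ℝ} (h : ⌊a / s⌋ + 2 ≤ ⌊b / s⌋) :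
    s < b - a := by
  have ha := Int.lt_floor_add_one (a / s)
  have hb := Int.floor_le (b / s)
  have h' : (⌊a / s⌋ : ℝ) + 2 ≤ ⌊b / s⌋ := by exact_mod_cast h
  have : 1 < b / s - a / s := by linarith
  rwa [← sub_div, one_lt_div hs] at this

theorem exists_lt_abs_sub_of_mem_cube (hs : 0 < s) {m' : Fin n → ℤ} (hm : m ≠ m')
    (hpar : ∀ k, (m k : ZMod 2) = m' k) {x y : X} (hx : x ∈ cube Φ s m) (hy : y ∈ cube Φ s m') :
    ∃ k, s < |Φ y k - Φ x k| := by
  obtain ⟨k, hk⟩ := Function.ne_iff.1 hm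
  have hdvd := (ZMod.intCast_eq_intCast_iff_dvd_sub _ _ 2).1 (hpar k)
  rw [← hx k, ← hy k] at hk hdvd
  refine ⟨k, ?_⟩
  rcases (by omega : ⌊Φ x k / s⌋ + 2 ≤ ⌊Φ y k / s⌋ ∨ ⌊Φ y k / s⌋ + 2 ≤ ⌊Φ x k / s⌋) with h | h
  · exact (lt_sub_of_floor_add_two_le hs h).trans_le (le_abs_self _)
  · exact abs_sub_comm (Φ x k) (Φ y k) ▸ (lt_sub_of_floor_add_two_le hs h).trans_le (le_abs_self _)

theorem CubeStep.symm (hd : ∀ x y, d x y = d y x) {x y : X} (h : CubeStep d Φ s m x y) :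
    CubeStep d Φ s m y x :=
  ⟨h.2.1, h.1, hd x y ▸ h.2.2⟩

theorem mem_cube_of_reflTransGen {x y : X} (h : Relation.ReflTransGen (CubeStep d Φ s m) x y)
    (hx : x ∈ cube Φ s m) : y ∈ cube Φ s m := by
  rcases h.cases_tail with rfl | ⟨_, _, hstep⟩
  · exact hx
  · exact hstep.2.1

end Cubes

theorem uniformFinAsdim_of_finite_colors {ι : Type} {X : ι → Type} {d : ∀ i, X i → X i → ℝ}
    {C : Type} [Finite C]
    (h : ∀ r : ℝ, 0 < r → ∃ B : ℝ, ∀ i : ι, ∃ 𝒰 : C → Set (Set (X i)),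
      (∀ x : X i, ∃ c, ∃ U ∈ 𝒰 c, x ∈ U) ∧
      (∀ c, ∀ U ∈ 𝒰 c, ∀ V ∈ 𝒰 c, U ≠ V → ∀ x ∈ U, ∀ y ∈ V, r < d i x y) ∧
      (∀ c, ∀ U ∈ 𝒰 c, ∀ x ∈ U, ∀ y ∈ U, d i x y ≤ B)) :
    UniformFinAsdim X d := by
  obtain ⟨N, ⟨e⟩⟩ := Finite.exists_equiv_fin C
  let color : C → Fin (N + 1) := fun c => (e c).castSucc
  have hcolor : Function.Injective color := fun _ _ h => e.injective (Fin.castSucc_injective _ h)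
  refine ⟨N, fun r hr => ?_⟩
  obtain ⟨B, hB⟩ := h r hr
  refine ⟨B, fun i => ?_⟩
  obtain ⟨𝒰, hcover, hdisj, hdiam⟩ := hB i
  refine ⟨fun k => {U | ∃ c, color c = k ∧ U ∈ 𝒰 c}, ?_, ?_, ?_⟩
  · intro x
    obtain ⟨c, U, hU, hx⟩ := hcover x
    exact ⟨color c, U, ⟨c, rfl, hU⟩, hx⟩
  · rintro k U ⟨c, rfl, hU⟩ V ⟨c', hc', hV⟩
    exact hdisj c U hU V (hcolor hc' ▸ hV)
  · rintro k U ⟨c, -, hU⟩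
    exact hdiam c U hU

open Relation in
theorem uniformFinAsdim_of_lipschitz_of_cube_chains {ι : Type} {X : ι → Type}
    {d : ∀ i, X i → X i → ℝ} {n : ℕ} (Φ : ∀ i, X i → Fin n → ℝ)
    (hd : ∀ i x y, d i x y = d i y x) (hΦ : ∀ i x y k, Φ i y k - Φ i x k ≤ d i x y)
    (hchain : ∀ r : ℝ, 0 < r → ∃ B : ℝ, ∀ i m x y, x ∈ cube (Φ i) r m →
      ReflTransGen (CubeStep (d i) (Φ i) r m) x y → d i x y ≤ B) :
    UniformFinAsdim X d := by
  refine uniformFinAsdim_of_finite_colors (C := Fin n → ZMod 2) fun r hr => ?_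
  obtain ⟨B, hB⟩ := hchain r hr
  refine ⟨B, fun i => ?_⟩
  let chains (m : Fin n → ℤ) (x : X i) : Set (X i) :=
    {y | ReflTransGen (CubeStep (d i) (Φ i) r m) x y}
  have hsymm (m) {x y} : ReflTransGen (CubeStep (d i) (Φ i) r m) x y →
      ReflTransGen (CubeStep (d i) (Φ i) r m) y x :=
    have : Std.Symm (CubeStep (d i) (Φ i) r m) := ⟨fun _ _ => CubeStep.symm (hd i)⟩
    Std.Symm.symm x y
  refine ⟨fun c => {U | ∃ m : Fin n → ℤ, (fun k => (m k : ZMod 2)) = c ∧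
    ∃ x ∈ cube (Φ i) r m, U = chains m x}, ?_, ?_, ?_⟩
  · intro x
    exact ⟨_, _, ⟨fun k => ⌊Φ i x k / r⌋, rfl, x, fun k => rfl, rfl⟩, ReflTransGen.refl⟩
  · rintro c U ⟨m, rfl, x₀, hx₀, rfl⟩ V ⟨m', hmm', y₀, hy₀, rfl⟩ hUV x hx y hy
    by_contra! hxy
    have hxm := mem_cube_of_reflTransGen hx hx₀
    have hym := mem_cube_of_reflTransGen hy hy₀
    by_cases hm : m = m'
    · subst hm
      have hx₀y₀ : ReflTransGen _ x₀ y₀ := (hx.tail ⟨hxm, hym, hxy⟩).trans (hsymm m hy)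
      exact hUV (Set.ext fun z => ⟨(hsymm m hx₀y₀).trans, hx₀y₀.trans⟩)
    · obtain ⟨k, hk⟩ := exists_lt_abs_sub_of_mem_cube hr hm (congrFun hmm'.symm) hxm hym
      have hyx := hd i x y ▸ hΦ i y x k
      exact hk.not_ge (abs_sub_le_iff.2 ⟨hΦ i x y k, hyx⟩ |>.trans hxy)
  · rintro c U ⟨m, -, x₀, hx₀, rfl⟩ x hx y hy
    exact hB i m x y (mem_cube_of_reflTransGen hx hx₀) ((hsymm m hx).trans hy)

section QuotDist

variable {G : Type} [Group G] {d : G → G → ℝ} {F : Subgroup G}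

theorem quotDist_le (hF : (F : Set G).Finite) (x y : G) {f : G} (hf : f ∈ F) :
    quotDist d F x y ≤ d (f * x) y :=
  have : Finite F := hF.to_subtype
  ciInf_le (Set.finite_range _).bddBelow (⟨f, hf⟩ : F)

theorem exists_le_of_quotDist_le (hF : (F : Set G).Finite) {x y : G} {c : ℝ}
    (h : quotDist d F x y ≤ c) : ∃ f ∈ F, d (f * x) y ≤ c := by
  have : Finite F := hF.to_subtype
  obtain ⟨f, hf⟩ := exists_eq_ciInf_of_finite (f := fun f : F => d (f * x) y)
  exact ⟨f, f.2, hf ▸ h⟩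

end QuotDist

section NormLength

variable {K : Type} [Field K] {n : ℕ}

theorem normLength_inv (γ : K → ℝ) (g : GL (Fin n) K) : normLength γ g⁻¹ = normLength γ g := by
  simp only [normLength, inv_inv, max_comm]

theorem quotDist_normDist_comm (γ : K → ℝ) (F : Subgroup (GL (Fin n) K)) (x y : GL (Fin n) K) :
    quotDist (normDist γ) F x y = quotDist (normDist γ) F y x := by
  rw [quotDist, ← (Equiv.inv F).iInf_comp]
  congr 1 with f
  rw [normDist, normDist, ← normLength_inv]
  simp [mul_assoc]

variable {v : AbsoluteValue K ℝ} {g : GL (Fin n) K}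

theorem normLength_le_log {C : ℝ} (hC : 1 ≤ C) (h : ∀ i j, v (g i j) ≤ C ∧ v (g⁻¹ i j) ≤ C) :
    normLength v g ≤ Real.log C := by
  set f : Fin n × Fin n → ℝ := fun p => max (v (g p.1 p.2)) (v (g⁻¹ p.1 p.2))
  have hsup : ⨆ p, f p ≤ C :=
    Real.iSup_le (fun p => max_le (h p.1 p.2).1 (h p.1 p.2).2) (by linarith)
  rcases (Real.iSup_nonneg fun p => le_max_of_le_left (v.nonneg _) : 0 ≤ ⨆ p, f p).eq_or_lt
    with h0 | h0
  · change Real.log (⨆ p, f p) ≤ Real.log C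
    rw [← h0, Real.log_zero]
    exact Real.log_nonneg hC
  · exact Real.log_le_log h0 hsup

theorem abv_apply_le_exp_of_normLength_le {c : ℝ} (h : normLength v g ≤ c) (i j : Fin n) :
    v (g i j) ≤ Real.exp c ∧ v (g⁻¹ i j) ≤ Real.exp c := by
  set f : Fin n × Fin n → ℝ := fun p => max (v (g p.1 p.2)) (v (g⁻¹ p.1 p.2))
  have hle : f (i, j) ≤ ⨆ p, f p := le_ciSup (Set.finite_range f).bddAbove (i, j)
  rcases le_or_gt (⨆ p, f p) 0 with h0 | h0
  · exact max_le_iff.1 (by linarith [Real.exp_pos c])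
  · exact max_le_iff.1 (hle.trans ((Real.log_le_iff_le_exp h0).1 h))

end NormLength

namespace IsNonarchimedean

variable {K : Type*} [Field K] {v : AbsoluteValue K ℝ} (hv : IsNonarchimedean v)
  {ι : Type*} [Fintype ι]
include hv

theorem exists_abv_mul_apply_le (A B : Matrix ι ι K) (i j : ι) :
    ∃ l, v ((A * B) i j) ≤ v (A i l) * v (B l j) := by
  obtain ⟨l, -, hl⟩ := hv.finset_image_add_of_nonempty (fun l => A i l * B l j)
    (Finset.univ_nonempty_iff.2 ⟨i⟩)
  exact ⟨l, by simpa [Matrix.mul_apply] using hl⟩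

theorem abv_mul_apply_le {A B : Matrix ι ι K} {a b : ℝ} (hA : ∀ i j, v (A i j) ≤ a)
    (hB : ∀ i j, v (B i j) ≤ b) (i j : ι) : v ((A * B) i j) ≤ a * b := by
  obtain ⟨l, hl⟩ := hv.exists_abv_mul_apply_le A B i j
  exact hl.trans (mul_le_mul (hA i l) (hB l j) (v.nonneg _) ((v.nonneg _).trans (hA i l)))

theorem abv_det_le [DecidableEq ι] {A : Matrix ι ι K} {E : ℝ} (hA : ∀ i j, v (A i j) ≤ E) :
    v A.det ≤ E ^ Fintype.card ι := by
  obtain ⟨σ, -, hσ⟩ := hv.finset_image_add_of_nonempty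
    (fun σ : Equiv.Perm ι => Equiv.Perm.sign σ • ∏ i, A (σ i) i) Finset.univ_nonempty
  rw [← Matrix.det_apply] at hσ
  refine hσ.trans ?_
  rw [Units.smul_def, zsmul_eq_mul, map_mul, AbsoluteValue.map_prod, ← Finset.card_univ,
    ← Finset.prod_const]
  rcases Int.units_eq_one_or (Equiv.Perm.sign σ) with h | h <;>
  · simp only [h, Units.val_one, Units.val_neg, Int.cast_one, Int.cast_neg, map_one, map_neg_eq_map,
      one_mul]
    exact Finset.prod_le_prod (fun i _ => v.nonneg _) (fun i _ => hA _ _)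

theorem abv_inv_apply_le [DecidableEq ι] {A : Matrix ι ι K} {E : ℝ} (hE : 1 ≤ E)
    (hA : ∀ i j, v (A i j) ≤ E) (i j : ι) : v (A⁻¹ i j) ≤ E ^ Fintype.card ι / v A.det := by
  rw [Matrix.inv_def, Matrix.smul_apply, smul_eq_mul, Ring.inverse_eq_inv', map_mul, map_inv₀,
    inv_mul_eq_div, Matrix.adjugate_apply]
  gcongr
  refine hv.abv_det_le fun a b => ?_
  rw [Matrix.updateRow_apply]
  split_ifs
  · rcases eq_or_ne i b with rfl | hb
    · simpa using hE
    · simp only [Pi.single_apply, hb.symm, if_false, map_zero]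
      linarith
  · exact hA a b

end IsNonarchimedean

theorem Matrix.IsUpperTriangular.mul_apply_self {ι R : Type*} [Fintype ι] [LinearOrder ι]
    [NonUnitalNonAssocSemiring R] {A B : Matrix ι ι R} (hA : A.IsUpperTriangular)
    (hB : B.IsUpperTriangular) (i : ι) : (A * B) i i = A i i * B i i := by
  rw [Matrix.mul_apply]
  refine Finset.sum_eq_single i (fun l _ hl => ?_) (by simp)
  rcases hl.lt_or_gt with hl | hl
  · rw [hA hl, zero_mul]
  · rw [hB hl, mul_zero]

section TriangularGL

variable (K ι : Type*) [Field K] [Fintype ι] [DecidableEq ι] [LinearOrder ι]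

def upperTriangularGL : Subgroup (GL ι K) where
  carrier := {g | (g : Matrix ι ι K).IsUpperTriangular}
  one_mem' := Matrix.blockTriangular_one
  mul_mem' := Matrix.BlockTriangular.mul
  inv_mem' {g} hg := by
    have := g.invertible
    simpa [Matrix.coe_units_inv] using Matrix.blockTriangular_inv_of_blockTriangular hg

variable {K ι} in
theorem upperTriangularGL_mul_apply_self {g h : GL ι K} (hg : g ∈ upperTriangularGL K ι)
    (hh : h ∈ upperTriangularGL K ι) (i : ι) :
    (g * h) i i = g i i * h i i :=
  Matrix.IsUpperTriangular.mul_apply_self hg hh i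

def unitriangularGL : Subgroup (GL ι K) where
  carrier := {g | g ∈ upperTriangularGL K ι ∧ ∀ i, g i i = 1}
  one_mem' := ⟨Matrix.blockTriangular_one, Matrix.one_apply_eq⟩
  mul_mem' {a b} ha hb := ⟨mul_mem ha.1 hb.1, fun i => by
    rw [upperTriangularGL_mul_apply_self ha.1 hb.1, ha.2, hb.2, one_mul]⟩
  inv_mem' {g} hg := by
    have hinv : g⁻¹ ∈ upperTriangularGL K ι := inv_mem hg.1
    refine ⟨hinv, fun i => ?_⟩
    have h1 : (g⁻¹ * g) i i = 1 := by simp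
    rwa [upperTriangularGL_mul_apply_self hinv hg.1, hg.2, mul_one] at h1

variable {K ι}

theorem upperTriangularGL_apply_self_ne_zero {g : GL ι K} (hg : g ∈ upperTriangularGL K ι)
    (i : ι) : g i i ≠ 0 := by
  have h1 : (g * g⁻¹) i i = 1 := by simp
  rw [upperTriangularGL_mul_apply_self hg (inv_mem hg)] at h1
  exact left_ne_zero_of_mul_eq_one h1

end TriangularGL

section IntegralGL

variable {K ι : Type*} [Field K] [Fintype ι] [DecidableEq ι] {v : AbsoluteValue K ℝ}
  (hv : IsNonarchimedean v)

/-- `GL_n(𝒪)` for the valuation ring `𝒪 = {x | v x ≤ 1}`. -/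
def integralGL : Subgroup (GL ι K) where
  carrier := {k | ∀ i j, v (k i j) ≤ 1 ∧ v (k⁻¹ i j) ≤ 1}
  one_mem' i j := by
    rcases eq_or_ne i j with rfl | hij <;> simp [*]
  mul_mem' {a b} ha hb i j := by
    refine ⟨?_, ?_⟩
    · simpa using hv.abv_mul_apply_le (fun i j => (ha i j).1) (fun i j => (hb i j).1) i j
    · simpa using hv.abv_mul_apply_le (fun i j => (hb i j).2) (fun i j => (ha i j).2) i j
  inv_mem' {k} hk i j := ⟨(hk i j).2, by simpa using (hk i j).1⟩

theorem abv_mul_mul_apply_le {k k' : GL ι K} (hk : k ∈ integralGL hv) (hk' : k' ∈ integralGL hv)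
    {M : Matrix ι ι K} {c : ℝ} (hM : ∀ i j, v (M i j) ≤ c) (i j : ι) :
    v (((k : Matrix ι ι K) * M * k') i j) ≤ c := by
  simpa using hv.abv_mul_apply_le (hv.abv_mul_apply_le (fun i j => (hk i j).1) hM)
    (fun i j => (hk' i j).1) i j

end IntegralGL

section Iwasawa

variable {K : Type*} [Field K] {v : AbsoluteValue K ℝ} (hv : IsNonarchimedean v)

section AddColumns

variable {ι : Type*} [Fintype ι] [DecidableEq ι]

theorem vecMulVec_single_mul_self {R : Type*} [Semiring R] {a : ι} {w : ι → R} (hw : w a = 0) :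
    vecMulVec (Pi.single a 1) w * vecMulVec (Pi.single a 1) w = 0 := by
  simp [vecMulVec_mul_vecMulVec, hw]

def addColumns (a : ι) (w : ι → K) (hw : w a = 0) : GL ι K :=
  ⟨1 + vecMulVec (Pi.single a 1) w, 1 - vecMulVec (Pi.single a 1) w,
    by simp [mul_sub, add_mul, vecMulVec_single_mul_self hw],
    by simp [sub_mul, mul_add, vecMulVec_single_mul_self hw]⟩

theorem mul_addColumns_apply {a : ι} {w : ι → K} (hw : w a = 0) (g : GL ι K) (l j : ι) :
    (g * addColumns a w hw) l j = g l j + g l a * w j := by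
  simp [addColumns, mul_add, mul_vecMulVec, vecMulVec_apply]

include hv in
theorem addColumns_mem_integralGL {a : ι} {w : ι → K} (hw : w a = 0) (hw1 : ∀ j, v (w j) ≤ 1) :
    addColumns a w hw ∈ integralGL hv := by
  have hone (x y : ι) : v ((1 : Matrix ι ι K) x y) ≤ 1 := by
    rcases eq_or_ne x y with rfl | hxy <;> simp [*]
  have hsingle (x y : ι) : v (vecMulVec (Pi.single a 1) w x y) ≤ 1 := by
    rw [vecMulVec_apply, map_mul]
    rcases eq_or_ne x a with rfl | hxa
    · simpa using hw1 y
    · simp [hxa]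
  intro x y
  refine ⟨(hv _ _).trans (max_le (hone x y) (hsingle x y)), ?_⟩
  change v ((1 - vecMulVec (Pi.single a 1) w) x y) ≤ 1
  rw [Matrix.sub_apply, sub_eq_add_neg]
  exact (hv _ _).trans (max_le (hone x y) (by rw [AbsoluteValue.map_neg]; exact hsingle x y))

end AddColumns

variable {n : ℕ}

def RowsTriangularFrom (m : ℕ) (g : GL (Fin n) K) : Prop :=
  ∀ l j : Fin n, j < l → m ≤ (l : ℕ) → g l j = 0

theorem RowsTriangularFrom.exists_ne_zero {g : GL (Fin n) K} {i : Fin n}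
    (h : RowsTriangularFrom (i + 1) g) : ∃ j ≤ i, g i j ≠ 0 := by
  by_contra! hrow
  apply g.det_ne_zero
  rw [twoBlockTriangular_det _ (· ≤ i) fun a ha b hb => h a b (hb.trans_lt (not_le.1 ha))
    (not_le.1 ha)]
  exact mul_eq_zero_of_left (det_eq_zero_of_row_eq_zero (⟨i, le_rfl⟩ : {a // a ≤ i})
    fun b => hrow b b.2) _

include hv

theorem exists_rowsTriangularFrom_dominant_pivot (g : GL (Fin n) K) (i : Fin n)
    (h : RowsTriangularFrom (i + 1) g) :
    ∃ k ∈ integralGL hv, RowsTriangularFrom (i + 1) (g * k) ∧ (g * k) i i ≠ 0 ∧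
      ∀ j ≤ i, v ((g * k) i j) ≤ v ((g * k) i i) := by
  obtain ⟨j₀, hj₀, hne⟩ := h.exists_ne_zero
  obtain ⟨p, hp, hmax⟩ := Finset.exists_max_image (Finset.Iic i) (fun j => v (g i j))
    ⟨j₀, Finset.mem_Iic.2 hj₀⟩
  rw [Finset.mem_Iic] at hp
  have hpos : 0 < v (g i p) := (v.pos hne).trans_le (hmax j₀ (Finset.mem_Iic.2 hj₀))
  by_cases hdom : v (g i p) ≤ v (g i i)
  · refine ⟨1, one_mem _, by simpa using h, by simpa using v.pos_iff.1 (hpos.trans_le hdom),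
      fun j hj => ?_⟩
    simpa using (hmax j (Finset.mem_Iic.2 hj)).trans hdom
  -- Otherwise add column `p` to column `i`: by the strict ultrametric inequality the new
  -- diagonal entry has the maximal norm `v (g i p)`.
  have hpi : p ≠ i := by rintro rfl; exact hdom le_rfl
  have hw : (Pi.single i 1 : Fin n → K) p = 0 := by simp [hpi]
  have hii : v ((g * addColumns p (Pi.single i 1) hw) i i) = v (g i p) := by
    rw [mul_addColumns_apply, Pi.single_eq_same, mul_one]
    exact hv.add_eq_right_of_lt (not_le.1 hdom)
  refine ⟨addColumns p (Pi.single i 1) hw,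
    addColumns_mem_integralGL hv hw fun j => by simp [Pi.single_apply]; split_ifs <;> simp,
    fun l j hjl hl => ?_, v.pos_iff.1 (hii ▸ hpos), fun j hj => ?_⟩
  · rw [mul_addColumns_apply, h l j hjl hl, h l p (hp.trans_lt (Fin.lt_def.2 (by omega))) hl]
    simp
  · rw [hii]
    rcases eq_or_ne j i with rfl | hji
    · rw [← hii]
    · simpa [mul_addColumns_apply, hji] using hmax j (Finset.mem_Iic.2 hj)

theorem exists_rowsTriangularFrom_of_dominant_pivot (g : GL (Fin n) K) (i : Fin n)
    (h : RowsTriangularFrom (i + 1) g) (hii : g i i ≠ 0) (hdom : ∀ j ≤ i, v (g i j) ≤ v (g i i)) :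
    ∃ k ∈ integralGL hv, RowsTriangularFrom i (g * k) := by
  set w : Fin n → K := fun j => if j < i then -(g i j / g i i) else 0
  have hw : w i = 0 := by simp [w]
  refine ⟨addColumns i w hw, addColumns_mem_integralGL hv hw fun j => ?_, fun l j hjl hl => ?_⟩
  · simp only [w]
    split_ifs with hj
    · rw [AbsoluteValue.map_neg, map_div₀, div_le_one (v.pos hii)]
      exact hdom j hj.le
    · simp
  rw [mul_addColumns_apply]
  rcases (Nat.le_iff_lt_or_eq.1 hl) with hl | hl
  · rw [h l j hjl hl, h l i (Fin.lt_def.2 hl) hl]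
    simp
  · obtain rfl : i = l := Fin.ext hl
    simp only [w, if_pos hjl]
    field_simp
    ring

theorem exists_mul_mem_upperTriangularGL (g : GL (Fin n) K) :
    ∃ k ∈ integralGL hv, g * k ∈ upperTriangularGL K (Fin n) := by
  have key : ∀ m ≤ n, ∃ k ∈ integralGL hv, RowsTriangularFrom m (g * k) := by
    intro m hm
    induction hm using Nat.decreasingInduction with
    | self => exact ⟨1, one_mem _, fun l _ _ hl => absurd l.2 (not_lt.2 hl)⟩
    | of_succ m hm ih =>
      obtain ⟨k, hk, hrows⟩ := ih
      obtain ⟨k₁, hk₁, h₁, hii, hdom⟩ :=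
        exists_rowsTriangularFrom_dominant_pivot hv (g * k) ⟨m, hm⟩ hrows
      obtain ⟨k₂, hk₂, h₂⟩ :=
        exists_rowsTriangularFrom_of_dominant_pivot hv (g * k * k₁) ⟨m, hm⟩ h₁ hii hdom
      exact ⟨k * (k₁ * k₂), mul_mem hk (mul_mem hk₁ hk₂), by simpa only [mul_assoc] using h₂⟩
  obtain ⟨k, hk, hrows⟩ := key 0 n.zero_le
  exact ⟨k, hk, fun l j hjl => hrows l j hjl l.val.zero_le⟩

end Iwasawa

section IwasawaCoordinates

variable {K : Type} [Field K] {v : AbsoluteValue K ℝ} (hv : IsNonarchimedean v) {n : ℕ}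

theorem normLength_mul_mul_le {k g k' : GL (Fin n) K} (hk : k ∈ integralGL hv)
    (hk' : k' ∈ integralGL hv) {c : ℝ} (hc : 0 ≤ c) (h : normLength v g ≤ c) :
    normLength v (k * g * k') ≤ c := by
  rw [← Real.log_exp c]
  refine normLength_le_log (Real.one_le_exp hc) fun i j => ⟨?_, ?_⟩
  · rw [Units.val_mul, Units.val_mul]
    exact abv_mul_mul_apply_le hv hk hk'
      (fun i j => (abv_apply_le_exp_of_normLength_le h i j).1) i j
  · rw [_root_.mul_inv_rev, _root_.mul_inv_rev, ← mul_assoc, Units.val_mul, Units.val_mul]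
    exact abv_mul_mul_apply_le hv (inv_mem hk') (inv_mem hk)
      (fun i j => (abv_apply_le_exp_of_normLength_le h i j).2) i j

noncomputable def integralPart (g : GL (Fin n) K) : GL (Fin n) K :=
  (exists_mul_mem_upperTriangularGL hv g).choose

noncomputable def borelPart (g : GL (Fin n) K) : GL (Fin n) K :=
  g * integralPart hv g

noncomputable def logDiag (g : GL (Fin n) K) (i : Fin n) : ℝ :=
  Real.log (v (borelPart hv g i i))

noncomputable def relBorel (x φ y : GL (Fin n) K) : GL (Fin n) K :=
  (borelPart hv x)⁻¹ * φ * borelPart hv y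

theorem integralPart_mem (g : GL (Fin n) K) : integralPart hv g ∈ integralGL hv :=
  (exists_mul_mem_upperTriangularGL hv g).choose_spec.1

theorem borelPart_mem (g : GL (Fin n) K) : borelPart hv g ∈ upperTriangularGL K (Fin n) :=
  (exists_mul_mem_upperTriangularGL hv g).choose_spec.2

variable {x y : GL (Fin n) K}

theorem relBorel_mem {φ : GL (Fin n) K} (hφ : φ ∈ upperTriangularGL K (Fin n)) :
    relBorel hv x φ y ∈ upperTriangularGL K (Fin n) :=
  mul_mem (mul_mem (inv_mem (borelPart_mem hv x)) hφ) (borelPart_mem hv y)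

theorem relBorel_eq (φ : GL (Fin n) K) :
    relBorel hv x φ y = (integralPart hv x)⁻¹ * (x⁻¹ * φ * y) * integralPart hv y := by
  simp only [relBorel, borelPart]
  group

theorem relBorel_mul (φ ψ : GL (Fin n) K) (z : GL (Fin n) K) :
    relBorel hv x φ y * relBorel hv y ψ z = relBorel hv x (φ * ψ) z := by
  simp only [relBorel]
  group

theorem abv_borelPart_mul_relBorel {φ : GL (Fin n) K} (hφ : φ ∈ unitriangularGL K (Fin n))
    (i : Fin n) : v (borelPart hv x i i) * v (relBorel hv x φ y i i) = v (borelPart hv y i i) := by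
  have h : borelPart hv x * relBorel hv x φ y = φ * borelPart hv y := by
    simp only [relBorel]
    group
  have hii : (borelPart hv x * relBorel hv x φ y) i i = (φ * borelPart hv y) i i := by rw [h]
  rw [upperTriangularGL_mul_apply_self (borelPart_mem hv x) (relBorel_mem hv hφ.1),
    upperTriangularGL_mul_apply_self hφ.1 (borelPart_mem hv y), hφ.2, one_mul] at hii
  rw [← map_mul, hii]

theorem abv_borelPart_apply_self_pos (g : GL (Fin n) K) (i : Fin n) :
    0 < v (borelPart hv g i i) :=
  v.pos (upperTriangularGL_apply_self_ne_zero (borelPart_mem hv g) i)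

theorem abv_relBorel_apply_self_pos {φ : GL (Fin n) K} (hφ : φ ∈ upperTriangularGL K (Fin n))
    (i : Fin n) : 0 < v (relBorel hv x φ y i i) :=
  v.pos (upperTriangularGL_apply_self_ne_zero (relBorel_mem hv hφ) i)

theorem logDiag_eq_add_log {φ : GL (Fin n) K} (hφ : φ ∈ unitriangularGL K (Fin n)) (i : Fin n) :
    logDiag hv y i = logDiag hv x i + Real.log (v (relBorel hv x φ y i i)) := by
  rw [logDiag, logDiag, ← abv_borelPart_mul_relBorel hv hφ i,
    Real.log_mul (abv_borelPart_apply_self_pos hv x i).ne'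
      (abv_relBorel_apply_self_pos hv hφ.1 i).ne']

theorem abv_relBorel_inv_apply_le {f : GL (Fin n) K} {c : ℝ} (h : normDist v (f * x) y ≤ c)
    (i j : Fin n) : v (relBorel hv x f⁻¹ y i j) ≤ Real.exp c := by
  rw [relBorel_eq, Units.val_mul, Units.val_mul]
  refine abv_mul_mul_apply_le hv (inv_mem (integralPart_mem hv x)) (integralPart_mem hv y)
    (fun i j => ?_) i j
  simpa [normDist, mul_assoc] using (abv_apply_le_exp_of_normLength_le h i j).1

theorem logDiag_sub_le_quotDist {F : Subgroup (GL (Fin n) K)}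
    (hF : F ≤ unitriangularGL K (Fin n)) (x y : GL (Fin n) K) (i : Fin n) :
    logDiag hv y i - logDiag hv x i ≤ quotDist (normDist v) F x y := by
  refine le_ciInf fun f => ?_
  have hf := hF (inv_mem f.2)
  have hle := abv_relBorel_inv_apply_le hv (le_refl (normDist v ((f : GL (Fin n) K) * x) y)) i i
  rw [logDiag_eq_add_log hv hf i, add_sub_cancel_left]
  exact (Real.log_le_iff_le_exp (abv_relBorel_apply_self_pos hv hf.1 i)).2 hle

end IwasawaCoordinates

section DominatedByDiag

variable {K : Type*} [Field K] {v : AbsoluteValue K ℝ} {n : ℕ}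

def DominatedByDiag (v : AbsoluteValue K ℝ) (M : ℝ) (P : Matrix (Fin n) (Fin n) K) : Prop :=
  ∀ i j, v (P i j) ≤ M ^ ((j : ℕ) - i) * v (P j j)

theorem dominatedByDiag_one {M : ℝ} (hM : 0 ≤ M) :
    DominatedByDiag v M (1 : Matrix (Fin n) (Fin n) K) := by
  intro i j
  rcases eq_or_ne i j with rfl | hij
  · simp
  · simp only [Matrix.one_apply_ne hij, map_zero, Matrix.one_apply_eq, map_one, mul_one]
    positivity

variable {M D : ℝ} {P : Matrix (Fin n) (Fin n) K}

theorem DominatedByDiag.mul (hv : IsNonarchimedean v) (hdom : DominatedByDiag v M P)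
    {t : Matrix (Fin n) (Fin n) K} (hP : P.IsUpperTriangular) (ht : t.IsUpperTriangular)
    {c : ℝ} (htc : ∀ i j, v (t i j) ≤ c) (hPD : ∀ i, v (P i i) ≤ D)
    (hPtD : ∀ i, 1 ≤ D * v ((P * t) i i)) (hM1 : 1 ≤ M) (hM : c * D ^ 2 ≤ M) :
    DominatedByDiag v M (P * t) := by
  -- The term `l = j` is controlled by the dominance of `P`; for `l < j` the gap `c D² ≤ M` between
  -- consecutive powers of `M` absorbs the bounds `D` on `P` and `c` on `t`.
  intro i j
  obtain ⟨l, hl⟩ := hv.exists_abv_mul_apply_le P t i j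
  refine hl.trans ?_
  have hM0 : 0 ≤ M := zero_le_one.trans hM1
  rcases lt_trichotomy l j with hlj | rfl | hjl
  · rcases lt_or_ge l i with hli | hil
    · rw [hP hli, map_zero, zero_mul]
      positivity
    have hD : 0 ≤ D := (v.nonneg _).trans (hPD l)
    have hc : 0 ≤ c := (v.nonneg _).trans (htc l j)
    calc v (P i l) * v (t l j) ≤ M ^ ((l : ℕ) - i) * D * c * 1 := by
          rw [mul_one]
          exact mul_le_mul ((hdom i l).trans (mul_le_mul_of_nonneg_left (hPD l) (by positivity)))
            (htc l j) (v.nonneg _) (by positivity)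
      _ ≤ M ^ ((l : ℕ) - i) * D * c * (D * v ((P * t) j j)) := by
          gcongr
          exact hPtD j
      _ = M ^ ((l : ℕ) - i) * (c * D ^ 2) * v ((P * t) j j) := by ring
      _ ≤ M ^ ((l : ℕ) - i) * M * v ((P * t) j j) := by gcongr
      _ ≤ M ^ ((j : ℕ) - i) * v ((P * t) j j) := by
          rw [← pow_succ]
          have := Fin.lt_def.1 hlj
          have := Fin.le_def.1 hil
          exact mul_le_mul_of_nonneg_right (pow_le_pow_right₀ hM1 (by omega)) (v.nonneg _)
  · rw [Matrix.IsUpperTriangular.mul_apply_self hP ht, map_mul, ← mul_assoc]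
    exact mul_le_mul_of_nonneg_right (hdom i l) (v.nonneg _)
  · rw [ht hjl, map_zero, mul_zero]
    exact mul_nonneg (pow_nonneg hM0 _) (v.nonneg _)

theorem DominatedByDiag.abv_apply_le (hdom : DominatedByDiag v M P) (hM1 : 1 ≤ M)
    (hPD : ∀ i, v (P i i) ≤ D) (i j : Fin n) : v (P i j) ≤ M ^ n * D :=
  (hdom i j).trans (mul_le_mul (pow_le_pow_right₀ hM1 (by omega)) (hPD j) (v.nonneg _)
    (pow_nonneg (zero_le_one.trans hM1) _))

theorem DominatedByDiag.abv_inv_apply_le (hv : IsNonarchimedean v) (hdom : DominatedByDiag v M P)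
    (hP : P.IsUpperTriangular) (hM1 : 1 ≤ M) (hD1 : 1 ≤ D) (hPD : ∀ i, v (P i i) ≤ D)
    (hPD' : ∀ i, 1 ≤ D * v (P i i)) (i j : Fin n) : v (P⁻¹ i j) ≤ (M ^ n * D) ^ n * D ^ n := by
  have hdet : 1 ≤ D ^ n * v P.det := by
    rw [Matrix.det_of_isUpperTriangular hP, AbsoluteValue.map_prod, ← Fin.prod_const,
      ← Finset.prod_mul_distrib]
    calc (1 : ℝ) = ∏ _i : Fin n, 1 := by simp
      _ ≤ _ := Finset.prod_le_prod (fun _ _ => zero_le_one) fun i _ => hPD' i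
  have hdet0 : 0 < v P.det := pos_of_mul_pos_right (zero_lt_one.trans_le hdet) (by positivity)
  calc v (P⁻¹ i j) ≤ (M ^ n * D) ^ Fintype.card (Fin n) / v P.det :=
        hv.abv_inv_apply_le (one_le_mul_of_one_le_of_one_le (one_le_pow₀ hM1) hD1)
          (hdom.abv_apply_le hM1 hPD) i j
    _ ≤ (M ^ n * D) ^ n * D ^ n := by
        rw [Fintype.card_fin, div_le_iff₀ hdet0, mul_assoc]
        exact le_mul_of_one_le_right (by positivity) hdet

end DominatedByDiag

section Chains

variable {K : Type} [Field K] {v : AbsoluteValue K ℝ} (hv : IsNonarchimedean v) {n : ℕ}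
  {F : Subgroup (GL (Fin n) K)} {r : ℝ} {m : Fin n → ℤ} {x y : GL (Fin n) K}

include hv in
theorem DominatedByDiag.normLength_le {M D : ℝ} {P : GL (Fin n) K}
    (hdom : DominatedByDiag v M (P : Matrix (Fin n) (Fin n) K))
    (hP : P ∈ upperTriangularGL K (Fin n)) (hM1 : 1 ≤ M) (hD1 : 1 ≤ D)
    (hPD : ∀ i, v (P i i) ≤ D) (hPD' : ∀ i, 1 ≤ D * v (P i i)) :
    normLength v P ≤ Real.log ((M ^ n * D) ^ (n + 1) * D ^ n) := by
  have hE : 1 ≤ M ^ n * D := one_le_mul_of_one_le_of_one_le (one_le_pow₀ hM1) hD1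
  have hEC : M ^ n * D ≤ (M ^ n * D) ^ (n + 1) * D ^ n :=
    (le_self_pow₀ hE n.succ_ne_zero).trans
      (le_mul_of_one_le_right (by positivity) (one_le_pow₀ hD1))
  refine normLength_le_log (hE.trans hEC) fun i j => ⟨(hdom.abv_apply_le hM1 hPD i j).trans hEC, ?_⟩
  rw [Matrix.coe_units_inv]
  refine (hdom.abv_inv_apply_le hv hP hM1 hD1 hPD hPD' i j).trans ?_
  exact mul_le_mul_of_nonneg_right (pow_le_pow_right₀ hE n.le_succ) (by positivity)

theorem abv_relBorel_apply_self_le (hr : 0 < r) (hx : x ∈ cube (logDiag hv) r m)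
    (hy : y ∈ cube (logDiag hv) r m) {φ : GL (Fin n) K} (hφ : φ ∈ unitriangularGL K (Fin n))
    (i : Fin n) :
    v (relBorel hv x φ y i i) ≤ Real.exp r ∧ 1 ≤ Real.exp r * v (relBorel hv x φ y i i) := by
  have hxy := sub_lt_of_mem_cube hr hx hy i
  have hyx := sub_lt_of_mem_cube hr hy hx i
  rw [logDiag_eq_add_log hv (x := x) (y := y) hφ i] at hxy hyx
  rw [← Real.exp_log (abv_relBorel_apply_self_pos hv hφ.1 i), ← Real.exp_add]
  exact ⟨Real.exp_le_exp.2 (by linarith), Real.one_le_exp (by linarith)⟩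

theorem exists_dominatedByDiag_relBorel (hF : F ≤ unitriangularGL K (Fin n))
    (hFfin : (F : Set (GL (Fin n) K)).Finite) (hr : 0 < r) (hx : x ∈ cube (logDiag hv) r m)
    (h : Relation.ReflTransGen (CubeStep (quotDist (normDist v) F) (logDiag hv) r m) x y) :
    ∃ φ ∈ F,
      DominatedByDiag v (Real.exp (3 * r)) (relBorel hv x φ y : Matrix (Fin n) (Fin n) K) := by
  induction h with
  | refl => exact ⟨1, one_mem F, by simpa [relBorel] using dominatedByDiag_one (Real.exp_pos _).le⟩
  | tail _ hstep ih =>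
    obtain ⟨φ, hφ, hdom⟩ := ih
    obtain ⟨hy, hz, hyz⟩ := hstep
    obtain ⟨f, hf, hfyz⟩ := exists_le_of_quotDist_le hFfin hyz
    have hφf : φ * f⁻¹ ∈ F := mul_mem hφ (inv_mem hf)
    refine ⟨φ * f⁻¹, hφf, ?_⟩
    rw [← relBorel_mul, Units.val_mul]
    refine hdom.mul hv (relBorel_mem hv (hF hφ).1) (relBorel_mem hv (hF (inv_mem hf)).1)
      (abv_relBorel_inv_apply_le hv hfyz)
      (fun i => (abv_relBorel_apply_self_le hv hr hx hy (hF hφ) i).1) (fun i => ?_)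
      (Real.one_le_exp (by positivity)) ?_
    · rw [← Units.val_mul, relBorel_mul]
      exact (abv_relBorel_apply_self_le hv hr hx hz (hF hφf) i).2
    · rw [sq, ← Real.exp_add, ← Real.exp_add]
      exact le_of_eq (by ring_nf)

theorem quotDist_le_of_reflTransGen (hF : F ≤ unitriangularGL K (Fin n))
    (hFfin : (F : Set (GL (Fin n) K)).Finite) (hr : 0 < r) (hx : x ∈ cube (logDiag hv) r m)
    (h : Relation.ReflTransGen (CubeStep (quotDist (normDist v) F) (logDiag hv) r m) x y) :
    quotDist (normDist v) F x y ≤ ((3 * n + 1) * (n + 1) + n) * r := by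
  obtain ⟨φ, hφ, hdom⟩ := exists_dominatedByDiag_relBorel hv hF hFfin hr hx h
  have hPD := abv_relBorel_apply_self_le hv hr hx (mem_cube_of_reflTransGen h hx) (hF hφ)
  have hP := hdom.normLength_le hv (relBorel_mem hv (hF hφ).1) (Real.one_le_exp (by positivity))
    (Real.one_le_exp hr.le) (fun i => (hPD i).1) (fun i => (hPD i).2)
  have hB : Real.log ((Real.exp (3 * r) ^ n * Real.exp r) ^ (n + 1) * Real.exp r ^ n) =
      ((3 * n + 1) * (n + 1) + n) * r := by
    simp only [← Real.exp_nat_mul, ← Real.exp_add, Real.log_exp]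
    push_cast
    ring
  rw [hB] at hP
  calc quotDist (normDist v) F x y ≤ normDist v (φ⁻¹ * x) y := quotDist_le hFfin x y (inv_mem hφ)
    _ = normLength v (integralPart hv x * relBorel hv x φ y * (integralPart hv y)⁻¹) := by
      rw [normDist, relBorel_eq]
      group
    _ ≤ _ := normLength_mul_mul_le hv (integralPart_mem hv x) (inv_mem (integralPart_mem hv y))
      (by positivity) hP

end Chains

theorem unipotent_finite_subgroup_quotients_uniformFinAsdim_general
    {K : Type} [Field K]
    (n : ℕ) (γ : K → ℝ) (hγ : IsDiscreteNorm γ) :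
    UniformFinAsdim
      (fun _ : {F : Subgroup (GL (Fin n) K) // (F : Set (GL (Fin n) K)).Finite ∧
          ∀ g ∈ F, (∀ i j : Fin n, j < i → (g : Matrix (Fin n) (Fin n) K) i j = 0) ∧
            (∀ i : Fin n, (g : Matrix (Fin n) (Fin n) K) i i = 1)} => GL (Fin n) K)
      (fun F => quotDist (normDist γ) F.1) := by
  have hv := hγ.isNonarchimedean
  exact uniformFinAsdim_of_lipschitz_of_cube_chains (fun _ => logDiag hv)
    (fun F => quotDist_normDist_comm γ F.1) (fun F => logDiag_sub_le_quotDist hv F.2.2)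
    fun r hr => ⟨_, fun F _ _ _ hx h => quotDist_le_of_reflTransGen hv F.2.2 F.2.1 hr hx h⟩

/-- Let `K` be a field of positive characteristic and `γ` a discrete norm
on `K`. Let `U ≤ GL_n(K)` be the group of unipotent upper triangular matrices. The family
`{F\GL_n(K)}_F`, where `F` ranges over all finite subgroups of `U`, has finite asymptotic
dimension uniformly with respect to the pseudometric associated to `γ`. -/
theorem unipotent_finite_subgroup_quotients_uniformFinAsdim
    {K : Type} [Field K] (p : ℕ) (hp : p ≠ 0) [CharP K p]
    (n : ℕ) (γ : K → ℝ) (hγ : IsDiscreteNorm γ) :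
    UniformFinAsdim
      (fun _ : {F : Subgroup (GL (Fin n) K) // (F : Set (GL (Fin n) K)).Finite ∧
          ∀ g ∈ F, (∀ i j : Fin n, j < i → (g : Matrix (Fin n) (Fin n) K) i j = 0) ∧
            (∀ i : Fin n, (g : Matrix (Fin n) (Fin n) K) i i = 1)} => GL (Fin n) K)
      (fun F => quotDist (normDist γ) F.1) :=
  unipotent_finite_subgroup_quotients_uniformFinAsdim_general n γ hγ
end

section
/- Let G be a group with a proper left-invariant metric such that the metric family {H\G}_{H∈Fin} of quotients of G by all its finite subgroups has finite decomposition complexity. Then the equivariant metric family {(G,H)}_{H∈Fin}, where each finite subgroup H acts on G by left multiplication, has equivariant finite decomposition complexity. -/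
open Matrix

/-- A metric family: a family of (pseudo)metric spaces. -/
structure MetricFamily : Type 1 where
  idx : Type
  spc : idx → Type
  dist : ∀ i, spc i → spc i → ℝ

/-- Given for each member `spc i` of a family a collection `𝒰 i` of subsets (pieces),
the family of all these pieces with their induced metrics. -/
def MetricFamily.ofPieces (F : MetricFamily) (𝒰 : ∀ i, Set (Set (F.spc i))) :
    MetricFamily where
  idx := Σ i, ↥(𝒰 i)
  spc := fun q => ↥(q.2.1)
  dist := fun q x y => F.dist q.1 x.1 y.1

/-- A metric family is bounded if its members have uniformly bounded diameter. -/
def MetricFamily.Bounded (F : MetricFamily) : Prop :=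
  ∃ B : ℝ, ∀ i x y, F.dist i x y ≤ B

/-- A collection of subsets is `r`-disjoint if distinct members are at distance `> r`. -/
def RDisjointCollection {X : Type} (d : X → X → ℝ) (r : ℝ) (𝒰 : Set (Set X)) : Prop :=
  ∀ U ∈ 𝒰, ∀ V ∈ 𝒰, U ≠ V → ∀ x ∈ U, ∀ y ∈ V, r < d x y

/-- A metric family decomposes over a class `D` of metric families if for every `r > 0`
each member splits as a union `U ∪ V`, each of `U`, `V` being an `r`-disjoint union of
pieces, such that the two resulting families of pieces lie in `D`. -/
def MetricFamily.DecomposesOver (F : MetricFamily) (D : MetricFamily → Prop) : Prop :=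
  ∀ r : ℝ, 0 < r → ∃ 𝒰 𝒱 : ∀ i, Set (Set (F.spc i)),
    (∀ i (x : F.spc i), (∃ S ∈ 𝒰 i, x ∈ S) ∨ (∃ S ∈ 𝒱 i, x ∈ S)) ∧
    (∀ i, RDisjointCollection (F.dist i) r (𝒰 i)) ∧
    (∀ i, RDisjointCollection (F.dist i) r (𝒱 i)) ∧
    D (F.ofPieces 𝒰) ∧ D (F.ofPieces 𝒱)

/-- The hierarchy `𝔇_γ`: `𝔇_0` = bounded families, `𝔇_{γ+1}` = families decomposing over
`𝔇_γ`, and unions at limit ordinals. -/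
noncomputable def FDCClass (γ : Ordinal.{0}) : MetricFamily → Prop :=
  Ordinal.limitRecOn γ MetricFamily.Bounded
    (fun _ D F => F.DecomposesOver D)
    (fun o _ D F => ∃ β, ∃ h : β < o, D β h F)

/-- A metric family has finite decomposition complexity if it lies in `𝔇_γ` for some
ordinal `γ`. -/
def HasFDC (F : MetricFamily) : Prop := ∃ γ : Ordinal.{0}, FDCClass γ F

/-- The metric family `{F\G}_{F ∈ Fin}` of quotients of `G` by all its finite subgroups,
each quotient realized as `G` with the quotient pseudometric. -/
noncomputable def quotFamily (G : Type) [Group G] (d : G → G → ℝ) : MetricFamily where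
  idx := {F : Subgroup G // (F : Set G).Finite}
  spc := fun _ => G
  dist := fun F x y => quotDist d F.1 x y

open scoped ENNReal

/-- An equivariant metric family: a family of (extended-real-valued) metric spaces
`spc i` together with a group `grp i` acting on `spc i`. -/
structure EquivMetricFamily : Type 1 where
  idx : Type
  grp : idx → Type
  spc : idx → Type
  dist : ∀ i, spc i → spc i → ℝ≥0∞
  act : ∀ i, grp i → spc i → spc i

open Classical in
/-- Given for each member a collection of pieces, the equivariant family whose members are
the disjoint unions of the pieces (points in different pieces at distance `∞`), with the
induced action (when the collections of pieces are invariant under the actions). -/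
noncomputable def EquivMetricFamily.subFam (F : EquivMetricFamily)
    (𝒰 : ∀ i, Set (Set (F.spc i))) : EquivMetricFamily where
  idx := F.idx
  grp := F.grp
  spc := fun i => {x : F.spc i // ∃ S ∈ 𝒰 i, x ∈ S}
  dist := fun i x y => if ∃ S ∈ 𝒰 i, x.1 ∈ S ∧ y.1 ∈ S then F.dist i x.1 y.1 else ⊤
  act := fun i g x =>
    if h : ∃ S ∈ 𝒰 i, F.act i g x.1 ∈ S then ⟨F.act i g x.1, h⟩ else x

/-- An equivariant metric family is semi-bounded if there is `R` such that all distances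
are `< R` or `= ∞`. -/
def EquivMetricFamily.SemiBounded (F : EquivMetricFamily) : Prop :=
  ∃ R : ℝ≥0∞, R ≠ ⊤ ∧ ∀ i x y, F.dist i x y < R ∨ F.dist i x y = ⊤

/-- Equivariant decomposition over a class `D` of equivariant metric families: for every
`r > 0` each member splits into two invariant subspaces, each an `r`-disjoint union of
pieces permuted by the group action, with the resulting two equivariant families
(of disjoint unions of the pieces) in `D`. -/
def EquivMetricFamily.DecomposesOver (F : EquivMetricFamily)
    (D : EquivMetricFamily → Prop) : Prop :=
  ∀ r : ℝ≥0∞, 0 < r → r ≠ ⊤ → ∃ 𝒰 𝒱 : ∀ i, Set (Set (F.spc i)),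
    (∀ i (x : F.spc i), (∃ S ∈ 𝒰 i, x ∈ S) ∨ (∃ S ∈ 𝒱 i, x ∈ S)) ∧
    (∀ i (g : F.grp i), ∀ S ∈ 𝒰 i, F.act i g '' S ∈ 𝒰 i) ∧
    (∀ i (g : F.grp i), ∀ S ∈ 𝒱 i, F.act i g '' S ∈ 𝒱 i) ∧
    (∀ i, ∀ S ∈ 𝒰 i, ∀ T ∈ 𝒰 i, S ≠ T → ∀ x ∈ S, ∀ y ∈ T, r < F.dist i x y) ∧
    (∀ i, ∀ S ∈ 𝒱 i, ∀ T ∈ 𝒱 i, S ≠ T → ∀ x ∈ S, ∀ y ∈ T, r < F.dist i x y) ∧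
    D (F.subFam 𝒰) ∧ D (F.subFam 𝒱)

/-- The equivariant hierarchy `e𝔇_γ`: `e𝔇_0` = semi-bounded equivariant families,
`e𝔇_{γ+1}` = equivariant families decomposing over `e𝔇_γ`, unions at limits. -/
noncomputable def EquivFDCClass (γ : Ordinal.{0}) : EquivMetricFamily → Prop :=
  Ordinal.limitRecOn γ EquivMetricFamily.SemiBounded
    (fun _ D F => F.DecomposesOver D)
    (fun o _ D F => ∃ β, ∃ h : β < o, D β h F)

/-- An equivariant metric family has equivariant finite decomposition complexity if it
lies in `e𝔇_γ` for some ordinal `γ`. -/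
def HasEquivFDC (F : EquivMetricFamily) : Prop := ∃ γ : Ordinal.{0}, EquivFDCClass γ F

/-!
Induct on the rank `γ` of the quotient family, for an arbitrary system of pairwise disjoint
`H`-invariant pieces `S ⊆ G` (one system for each finite subgroup `H`): if the quotients `H\S`
form a family in `𝔇_γ`, the disjoint unions of the pieces form an equivariant family in
`e𝔇_{1+γ}`; the theorem is the case of the single piece `G`.

If the `H\S` have diameter `≤ B`, cut the pieces into their `r`-chain components. Along an
`r`-chain starting at `x` every point is within `B + 1` of some `f * x`, with `f` in the subgroup
of `H` generated by the elements moving `x` by at most `2 (B + 1) + r`. Up to conjugation by `x`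
there are only finitely many such subgroups by properness, so the components are uniformly
bounded and the family lies in `e𝔇_1`.

In the inductive step, an `r`-decomposition of the `H\S` lifts to the saturations `H * T ⊆ S`
of its pieces. They form a new system of invariant pieces whose quotients are those pieces `T`,
and they are `r`-disjoint in `G` because `d` dominates the quotient pseudometric.
-/

open Set Relation
open scoped Pointwise

theorem fdcClass_zero (F : MetricFamily) : FDCClass 0 F ↔ F.Bounded := by
  rw [FDCClass, Ordinal.limitRecOn_zero]

theorem fdcClass_add_one (γ : Ordinal) (F : MetricFamily) :
    FDCClass (γ + 1) F ↔ F.DecomposesOver (FDCClass γ) := by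
  rw [FDCClass, Ordinal.limitRecOn_add_one]; rfl

theorem fdcClass_limit {γ : Ordinal} (hγ : Order.IsSuccLimit γ) (F : MetricFamily) :
    FDCClass γ F ↔ ∃ β < γ, FDCClass β F := by
  rw [FDCClass, Ordinal.limitRecOn_limit _ _ _ _ hγ]
  exact exists_congr fun _ => exists_prop

theorem equivFDCClass_zero (E : EquivMetricFamily) : EquivFDCClass 0 E ↔ E.SemiBounded := by
  rw [EquivFDCClass, Ordinal.limitRecOn_zero]

theorem equivFDCClass_add_one (γ : Ordinal) (E : EquivMetricFamily) :
    EquivFDCClass (γ + 1) E ↔ E.DecomposesOver (EquivFDCClass γ) := by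
  rw [EquivFDCClass, Ordinal.limitRecOn_add_one]; rfl

theorem equivFDCClass_limit {γ : Ordinal} (hγ : Order.IsSuccLimit γ) (E : EquivMetricFamily) :
    EquivFDCClass γ E ↔ ∃ β < γ, EquivFDCClass β E := by
  rw [EquivFDCClass, Ordinal.limitRecOn_limit _ _ _ _ hγ]
  exact exists_congr fun _ => exists_prop

theorem rDisjoint_image_preimage {α X Y : Type} [LT α] {d₁ : X → X → α} {d₂ : Y → Y → α}
    {ψ : Y → X} (hψ : ∀ x y, d₁ (ψ x) (ψ y) = d₂ x y) {r : α} {𝒰 : Set (Set X)}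
    (h𝒰 : ∀ U ∈ 𝒰, ∀ V ∈ 𝒰, U ≠ V → ∀ x ∈ U, ∀ y ∈ V, r < d₁ x y) :
    ∀ P ∈ preimage ψ '' 𝒰, ∀ Q ∈ preimage ψ '' 𝒰, P ≠ Q → ∀ x ∈ P, ∀ y ∈ Q, r < d₂ x y := by
  rintro _ ⟨U, hU, rfl⟩ _ ⟨V, hV, rfl⟩ hne x hx y hy
  rw [← hψ]
  exact h𝒰 U hU V hV (fun h => hne (h ▸ rfl)) _ hx _ hy

theorem exists_mem_image_preimage_iff {X Y : Type} {ψ : Y → X} {𝒰 : Set (Set X)} {x : Y} :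
    (∃ P ∈ preimage ψ '' 𝒰, x ∈ P) ↔ ∃ U ∈ 𝒰, ψ x ∈ U := by
  simp

theorem exists_mem_image_preimage_iff₂ {X Y : Type} {ψ : Y → X} {𝒰 : Set (Set X)} {x y : Y} :
    (∃ P ∈ preimage ψ '' 𝒰, x ∈ P ∧ y ∈ P) ↔ ∃ U ∈ 𝒰, ψ x ∈ U ∧ ψ y ∈ U := by
  simp

theorem FDCClass.comap {γ : Ordinal} {F₁ F₂ : MetricFamily} (φ : F₂.idx → F₁.idx)
    (ψ : ∀ i, F₂.spc i → F₁.spc (φ i))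
    (hψ : ∀ i x y, F₁.dist (φ i) (ψ i x) (ψ i y) = F₂.dist i x y)
    (h : FDCClass γ F₁) : FDCClass γ F₂ := by
  induction γ using Ordinal.limitRecOn generalizing F₁ F₂ with
  | zero =>
    rw [fdcClass_zero] at h ⊢
    obtain ⟨B, hB⟩ := h
    exact ⟨B, fun i x y => hψ i x y ▸ hB _ _ _⟩
  | add_one β IH =>
    rw [fdcClass_add_one] at h ⊢
    have hpieces : ∀ 𝒲 : ∀ i, Set (Set (F₁.spc i)), FDCClass β (F₁.ofPieces 𝒲) →
        FDCClass β (F₂.ofPieces fun i => preimage (ψ i) '' 𝒲 (φ i)) := fun 𝒲 =>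
      IH (fun q => ⟨φ q.1, q.2.2.choose, q.2.2.choose_spec.1⟩)
        (fun q x => ⟨ψ q.1 x.1, by
          rw [← mem_preimage, q.2.2.choose_spec.2]; exact x.2⟩) (fun q x y => hψ q.1 x.1 y.1)
    intro r hr
    obtain ⟨𝒰, 𝒱, hcov, h𝒰, h𝒱, hF𝒰, hF𝒱⟩ := h r hr
    refine ⟨fun i => preimage (ψ i) '' 𝒰 (φ i), fun i => preimage (ψ i) '' 𝒱 (φ i),
      fun i x => (hcov (φ i) (ψ i x)).imp exists_mem_image_preimage_iff.2
        exists_mem_image_preimage_iff.2,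
      fun i => rDisjoint_image_preimage (hψ i) (h𝒰 (φ i)),
      fun i => rDisjoint_image_preimage (hψ i) (h𝒱 (φ i)), hpieces 𝒰 hF𝒰, hpieces 𝒱 hF𝒱⟩
  | limit o ho IH =>
    rw [fdcClass_limit ho] at h ⊢
    obtain ⟨β, hβ, h⟩ := h
    exact ⟨β, hβ, IH β hβ φ ψ hψ h⟩

namespace EquivMetricFamily

variable {E : EquivMetricFamily} {𝒰 : ∀ i, Set (Set (E.spc i))} {i : E.idx}

theorem subFam_dist_of_mem {x y : (E.subFam 𝒰).spc i} {S : Set (E.spc i)} (hS : S ∈ 𝒰 i)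
    (hx : x.1 ∈ S) (hy : y.1 ∈ S) : (E.subFam 𝒰).dist i x y = E.dist i x.1 y.1 :=
  if_pos ⟨S, hS, hx, hy⟩

theorem subFam_dist_of_forall_not_mem {x y : (E.subFam 𝒰).spc i}
    (h : ¬∃ S ∈ 𝒰 i, x.1 ∈ S ∧ y.1 ∈ S) : (E.subFam 𝒰).dist i x y = ⊤ :=
  if_neg h

theorem subFam_act_val {g : E.grp i} {x : (E.subFam 𝒰).spc i}
    (h : ∃ S ∈ 𝒰 i, E.act i g x.1 ∈ S) : ((E.subFam 𝒰).act i g x).1 = E.act i g x.1 :=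
  congrArg Subtype.val (dif_pos h)

theorem subFam_act_of_forall_not_mem {g : E.grp i} {x : (E.subFam 𝒰).spc i}
    (h : ¬∃ S ∈ 𝒰 i, E.act i g x.1 ∈ S) : (E.subFam 𝒰).act i g x = x :=
  dif_neg h

end EquivMetricFamily

structure EquivMetricFamily.FiberIso (E₂ E₁ : EquivMetricFamily) where
  idxMap : E₂.idx → E₁.idx
  grpMap : ∀ i, E₂.grp i → E₁.grp (idxMap i)
  spcEquiv : ∀ i, E₂.spc i ≃ E₁.spc (idxMap i)
  dist_spcEquiv : ∀ i x y, E₁.dist (idxMap i) (spcEquiv i x) (spcEquiv i y) = E₂.dist i x y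
  spcEquiv_act :
    ∀ i g x, spcEquiv i (E₂.act i g x) = E₁.act (idxMap i) (grpMap i g) (spcEquiv i x)

namespace EquivMetricFamily.FiberIso

variable {E₁ E₂ : EquivMetricFamily} (e : E₂.FiberIso E₁)

def comapPieces (𝒰 : ∀ i, Set (Set (E₁.spc i))) (i : E₂.idx) : Set (Set (E₂.spc i)) :=
  preimage (e.spcEquiv i) '' 𝒰 (e.idxMap i)

theorem image_act_mem_comapPieces {𝒰 : ∀ i, Set (Set (E₁.spc i))}
    (h𝒰 : ∀ i (g : E₁.grp i), ∀ S ∈ 𝒰 i, E₁.act i g '' S ∈ 𝒰 i) (i : E₂.idx) (g : E₂.grp i) :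
    ∀ P ∈ e.comapPieces 𝒰 i, E₂.act i g '' P ∈ e.comapPieces 𝒰 i := by
  rintro _ ⟨U, hU, rfl⟩
  refine ⟨_, h𝒰 _ (e.grpMap i g) U hU, ?_⟩
  ext z
  constructor
  · rintro ⟨u, hu, hz⟩
    refine ⟨(e.spcEquiv i).symm u, by simpa using hu, (e.spcEquiv i).injective ?_⟩
    rw [e.spcEquiv_act, Equiv.apply_symm_apply, hz]
  · rintro ⟨x, hx, rfl⟩
    exact ⟨_, hx, (e.spcEquiv_act i g x).symm⟩

def subFam (𝒰 : ∀ i, Set (Set (E₁.spc i))) :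
    (E₂.subFam (e.comapPieces 𝒰)).FiberIso (E₁.subFam 𝒰) where
  idxMap := e.idxMap
  grpMap := e.grpMap
  spcEquiv i := (e.spcEquiv i).subtypeEquiv fun _ => exists_mem_image_preimage_iff
  dist_spcEquiv i x y := by
    by_cases h : ∃ U ∈ 𝒰 (e.idxMap i), e.spcEquiv i x.1 ∈ U ∧ e.spcEquiv i y.1 ∈ U
    · obtain ⟨U, hU, hx, hy⟩ := h
      exact (subFam_dist_of_mem (𝒰 := 𝒰) hU hx hy).trans <| (e.dist_spcEquiv i x.1 y.1).trans
        (subFam_dist_of_mem (mem_image_of_mem _ hU) hx hy).symm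
    · exact (subFam_dist_of_forall_not_mem (𝒰 := 𝒰) h).trans
        (subFam_dist_of_forall_not_mem (exists_mem_image_preimage_iff₂.not.mpr h)).symm
  spcEquiv_act i g x := by
    apply Subtype.ext
    by_cases h : ∃ U ∈ 𝒰 (e.idxMap i), E₁.act _ (e.grpMap i g) (e.spcEquiv i x.1) ∈ U
    · have h' : ∃ P ∈ e.comapPieces 𝒰 i, E₂.act i g x.1 ∈ P :=
        exists_mem_image_preimage_iff.mpr (e.spcEquiv_act i g x.1 ▸ h)
      exact (congrArg (e.spcEquiv i) (subFam_act_val h')).trans <|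
        (e.spcEquiv_act i g x.1).trans
          (subFam_act_val (x := ⟨e.spcEquiv i x.1, exists_mem_image_preimage_iff.1 x.2⟩) h).symm
    · have h' : ¬∃ P ∈ e.comapPieces 𝒰 i, E₂.act i g x.1 ∈ P :=
        exists_mem_image_preimage_iff.not.mpr (e.spcEquiv_act i g x.1 ▸ h)
      exact (congrArg (fun y => e.spcEquiv i y.1) (subFam_act_of_forall_not_mem h')).trans
        (congrArg Subtype.val (subFam_act_of_forall_not_mem
          (x := ⟨e.spcEquiv i x.1, exists_mem_image_preimage_iff.1 x.2⟩) h)).symm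

end EquivMetricFamily.FiberIso

theorem EquivFDCClass.comap {γ : Ordinal} {E₁ E₂ : EquivMetricFamily} (e : E₂.FiberIso E₁)
    (h : EquivFDCClass γ E₁) : EquivFDCClass γ E₂ := by
  induction γ using Ordinal.limitRecOn generalizing E₁ E₂ with
  | zero =>
    rw [equivFDCClass_zero] at h ⊢
    obtain ⟨R, hR, hbound⟩ := h
    exact ⟨R, hR, fun i x y => e.dist_spcEquiv i x y ▸ hbound _ _ _⟩
  | add_one β IH =>
    rw [equivFDCClass_add_one] at h ⊢
    intro r hr hr'
    obtain ⟨𝒰, 𝒱, hcov, hinv𝒰, hinv𝒱, h𝒰, h𝒱, hE𝒰, hE𝒱⟩ := h r hr hr'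
    exact ⟨e.comapPieces 𝒰, e.comapPieces 𝒱,
      fun i x => (hcov _ (e.spcEquiv i x)).imp exists_mem_image_preimage_iff.2
        exists_mem_image_preimage_iff.2,
      e.image_act_mem_comapPieces hinv𝒰, e.image_act_mem_comapPieces hinv𝒱,
      fun i => rDisjoint_image_preimage (e.dist_spcEquiv i) (h𝒰 _),
      fun i => rDisjoint_image_preimage (e.dist_spcEquiv i) (h𝒱 _),
      IH (e.subFam 𝒰) hE𝒰, IH (e.subFam 𝒱) hE𝒱⟩
  | limit o ho IH =>
    rw [equivFDCClass_limit ho] at h ⊢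
    obtain ⟨β, hβ, h⟩ := h
    exact ⟨β, hβ, IH β hβ e h⟩

namespace EquivMetricFamily.FiberIso

def toSubFamUniv (E : EquivMetricFamily) : E.FiberIso (E.subFam fun _ => {univ}) where
  idxMap := id
  grpMap _ := id
  spcEquiv _ := (Equiv.subtypeUnivEquiv fun _ => ⟨univ, rfl, trivial⟩).symm
  dist_spcEquiv _ _ _ := subFam_dist_of_mem rfl trivial trivial
  spcEquiv_act _ _ x :=
    Subtype.ext (subFam_act_val (𝒰 := fun _ => {univ}) (x := ⟨x, univ, rfl, trivial⟩)
      ⟨univ, rfl, trivial⟩).symm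

def subFamSubFam {E : EquivMetricFamily} {C D : ∀ i, Set (Set (E.spc i))}
    (hDC : ∀ i, ∀ A ∈ D i, ∃ S ∈ C i, A ⊆ S) :
    ((E.subFam C).subFam fun i => preimage Subtype.val '' D i).FiberIso (E.subFam D) where
  idxMap := id
  grpMap _ := id
  spcEquiv i :=
    { toFun x := ⟨x.1.1, exists_mem_image_preimage_iff.1 x.2⟩
      invFun x :=
        ⟨⟨x.1, let ⟨A, hA, hx⟩ := x.2; let ⟨S, hS, hAS⟩ := hDC i A hA; ⟨S, hS, hAS hx⟩⟩,
          exists_mem_image_preimage_iff.2 x.2⟩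
      left_inv _ := rfl
      right_inv _ := rfl }
  dist_spcEquiv i x y := by
    by_cases h : ∃ A ∈ D i, x.1.1 ∈ A ∧ y.1.1 ∈ A
    · obtain ⟨A, hA, hx, hy⟩ := h
      obtain ⟨S, hS, hAS⟩ := hDC i A hA
      exact (subFam_dist_of_mem (𝒰 := D) hA hx hy).trans <|
        (subFam_dist_of_mem (𝒰 := C) hS (hAS hx) (hAS hy)).symm.trans
        (subFam_dist_of_mem (E := E.subFam C) (mem_image_of_mem _ hA) hx hy).symm
    · exact (subFam_dist_of_forall_not_mem (𝒰 := D) h).trans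
        (subFam_dist_of_forall_not_mem (E := E.subFam C)
          (exists_mem_image_preimage_iff₂.not.mpr h)).symm
  spcEquiv_act i g x := by
    apply Subtype.ext
    by_cases hD : ∃ A ∈ D i, E.act i g x.1.1 ∈ A
    · obtain ⟨A, hA, hgx⟩ := hD
      obtain ⟨S, hS, hAS⟩ := hDC i A hA
      have hC : ((E.subFam C).act i g x.1).1 = E.act i g x.1.1 :=
        subFam_act_val ⟨S, hS, hAS hgx⟩
      exact (congrArg Subtype.val (subFam_act_val (E := E.subFam C)
        (exists_mem_image_preimage_iff.2 ⟨A, hA, hC ▸ hgx⟩))).trans <| hC.trans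
        (subFam_act_val (x := ⟨x.1.1, exists_mem_image_preimage_iff.1 x.2⟩) ⟨A, hA, hgx⟩).symm
    · have hE₁ :=
        subFam_act_of_forall_not_mem (x := ⟨x.1.1, exists_mem_image_preimage_iff.1 x.2⟩) hD
      refine Eq.trans ?_ (congrArg Subtype.val hE₁).symm
      by_cases hC : ∃ S ∈ C i, E.act i g x.1.1 ∈ S
      · have hC' : ((E.subFam C).act i g x.1).1 = E.act i g x.1.1 := subFam_act_val hC
        have h₂ := subFam_act_of_forall_not_mem (E := E.subFam C) (x := x)
          (exists_mem_image_preimage_iff.not.2 (hC' ▸ hD))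
        exact congrArg (fun y => y.1.1) h₂
      · have hC' : (E.subFam C).act i g x.1 = x.1 := subFam_act_of_forall_not_mem hC
        exact (congrArg Subtype.val (subFam_act_val (E := E.subFam C) (x := x)
          (by rw [hC']; exact x.2))).trans (congrArg Subtype.val hC')

end EquivMetricFamily.FiberIso

theorem Relation.image_setOf_reflTransGen {α : Type} {R : α → α → Prop} {f : α → α}
    (hf : Function.Bijective f) (hR : ∀ a b, R (f a) (f b) ↔ R a b) (x : α) :
    f '' {y | ReflTransGen R x y} = {y | ReflTransGen R (f x) y} := by
  ext y
  constructor
  · rintro ⟨z, hz, rfl⟩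
    exact hz.lift f fun a b h => (hR a b).2 h
  · intro hy
    obtain ⟨z, rfl⟩ := hf.2 y
    let e := Equiv.ofBijective f hf
    have hz := hy.lift e.symm fun a b h =>
      (hR _ _).1 (by convert h <;> exact e.apply_symm_apply _)
    change ReflTransGen R (e.symm (e x)) (e.symm (e z)) at hz
    rw [e.symm_apply_apply, e.symm_apply_apply] at hz
    exact ⟨z, hz, rfl⟩

theorem Relation.setOf_reflTransGen_eq {α : Type} {R : α → α → Prop} [Std.Symm R] {x y : α}
    (h : ReflTransGen R x y) : {z | ReflTransGen R x z} = {z | ReflTransGen R y z} := by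
  ext z
  exact ⟨(Std.Symm.symm _ _ h).trans, h.trans⟩

/-- The pieces are the `r`-chain components. -/
theorem EquivMetricFamily.equivFDCClass_one_of_chain_bounded (E : EquivMetricFamily)
    (hsymm : ∀ i x y, E.dist i x y = E.dist i y x)
    (hact : ∀ i g x y, E.dist i (E.act i g x) (E.act i g y) = E.dist i x y)
    (hbij : ∀ i g, Function.Bijective (E.act i g))
    (hchain : ∀ r, 0 < r → r ≠ ⊤ → ∃ B ≠ ⊤, ∀ i x y,
      ReflTransGen (fun a b => E.dist i a b ≤ r) x y → E.dist i x y ≤ B) :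
    EquivFDCClass 1 E := by
  rw [← zero_add 1, equivFDCClass_add_one]
  intro r hr hr'
  obtain ⟨B, hB, hbound⟩ := hchain r hr hr'
  have hR : ∀ i, Std.Symm fun a b => E.dist i a b ≤ r :=
    fun i => ⟨fun a b h => hsymm i a b ▸ h⟩
  let comp i x : Set (E.spc i) := {y | ReflTransGen (fun a b => E.dist i a b ≤ r) x y}
  have hempty : EquivFDCClass 0 (E.subFam fun _ => ∅) := by
    rw [equivFDCClass_zero]
    exact ⟨1, ENNReal.one_ne_top, fun i x => absurd x.2.choose_spec.1 (notMem_empty _)⟩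
  refine ⟨fun i => range (comp i), fun _ => ∅,
    fun i x => Or.inl ⟨_, mem_range_self x, ReflTransGen.refl⟩, ?_,
    fun _ _ _ h => absurd h (notMem_empty _), ?_, fun _ _ h => absurd h (notMem_empty _), ?_,
    hempty⟩
  · rintro i g _ ⟨x, rfl⟩
    exact ⟨E.act i g x, (Relation.image_setOf_reflTransGen (hbij i g)
      (fun a b => by rw [hact]) x).symm⟩
  · rintro i _ ⟨x, rfl⟩ _ ⟨x', rfl⟩ hne u hu v hv
    by_contra! huv
    have := hR i
    exact hne (Relation.setOf_reflTransGen_eq ((hu.tail huv).trans (Std.Symm.symm _ _ hv)))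
  · rw [equivFDCClass_zero]
    refine ⟨B + 1, ENNReal.add_ne_top.2 ⟨hB, ENNReal.one_ne_top⟩, fun i x y => ?_⟩
    by_cases h : ∃ S ∈ range (comp i), x.1 ∈ S ∧ y.1 ∈ S
    · obtain ⟨_, ⟨w, rfl⟩, hx, hy⟩ := h
      have := hR i
      refine Or.inl ((subFam_dist_of_mem (mem_range_self w) hx hy).trans_lt ?_)
      exact (hbound i _ _ ((Std.Symm.symm _ _ hx).trans hy)).trans_lt
        (ENNReal.lt_add_right hB one_ne_zero)
    · exact Or.inr (subFam_dist_of_forall_not_mem h)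

section QuotDist

variable {G : Type} [Group G] {d : G → G → ℝ} {H : Subgroup G}

theorem quotDist_le_s5 (hm : IsPseudoMetric d) (x y : G) : quotDist d H x y ≤ d x y :=
  (ciInf_le ⟨0, by rintro _ ⟨f, rfl⟩; exact hm.nonneg _ _⟩ (1 : H)).trans_eq (by simp)

theorem quotDist_self (hm : IsPseudoMetric d) (x : G) : quotDist d H x x = 0 :=
  ((quotDist_le_s5 hm x x).trans_eq (hm.refl x)).antisymm (le_ciInf fun _ => hm.nonneg _ _)

theorem quotDist_mul_left {h : G} (hh : h ∈ H) (x y : G) :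
    quotDist d H (h * x) y = quotDist d H x y :=
  Equiv.iInf_congr (Equiv.mulRight (⟨h, hh⟩ : H)) fun f => by simp [mul_assoc]

theorem quotDist_mul_right (hli : IsLeftInvariant d) {h : G} (hh : h ∈ H) (x y : G) :
    quotDist d H x (h * y) = quotDist d H x y :=
  (Equiv.iInf_congr (Equiv.mulLeft (⟨h, hh⟩ : H)) fun f => by
    simpa [mul_assoc] using hli h (f * x) y).symm

theorem quotDist_mul_mul (hli : IsLeftInvariant d) {h h' : G} (hh : h ∈ H) (hh' : h' ∈ H)
    (x y : G) : quotDist d H (h * x) (h' * y) = quotDist d H x y := by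
  rw [quotDist_mul_left hh, quotDist_mul_right hli hh']

theorem exists_dist_mul_lt_of_quotDist_lt {x y : G} {B : ℝ} (h : quotDist d H x y < B) :
    ∃ f ∈ H, d (f * x) y < B :=
  let ⟨f, hf⟩ := exists_lt_of_ciInf_lt h; ⟨f, f.2, hf⟩

end QuotDist

section Proper

variable {G : Type} [Group G] {d : G → G → ℝ}

/-- Conjugating by `x` turns the displacements `d x (k * x)` into distances from `1`, and by
properness only finitely many finite subgroups are generated by a subset of a ball around `1`. -/
theorem exists_forall_mem_closure_dist_mul_le (hli : IsLeftInvariant d) (hp : IsProper d)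
    (ρ : ℝ) : ∃ D, ∀ (x : G) (K : Set G), (∀ k ∈ K, d x (k * x) ≤ ρ) →
      (Subgroup.closure K : Set G).Finite → ∀ k ∈ Subgroup.closure K, d x (k * x) ≤ D := by
  have hball : {y | d 1 y ≤ ρ}.Finite := hp 1 ρ
  have hgen : {A : Set G | A ⊆ {y | d 1 y ≤ ρ} ∧ (Subgroup.closure A : Set G).Finite}.Finite :=
    hball.finite_subsets.subset fun A hA => hA.1
  obtain ⟨D, hD⟩ := ((hgen.biUnion fun A hA => hA.2).image (d 1)).bddAbove
  refine ⟨D, fun x K hK hfin k hk => ?_⟩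
  have hconj : ∀ k, d x (k * x) = d 1 (x⁻¹ * k * x) := fun k => by
    rw [← hli x⁻¹, inv_mul_cancel, mul_assoc]
  let c := (MulAut.conj x⁻¹).toMonoidHom
  have hc : ∀ k, c k = x⁻¹ * k * x := fun k => by simp [c]
  have hmem : c k ∈ Subgroup.closure (c '' K) := by
    rw [← MonoidHom.map_closure]; exact Subgroup.mem_map_of_mem c hk
  refine (hconj k).trans_le (hD ⟨c k, mem_biUnion ⟨?_, ?_⟩ hmem, by rw [hc]⟩)
  · rintro _ ⟨k', hk', rfl⟩
    simpa [hc, ← hconj] using hK k' hk'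
  · rw [← MonoidHom.map_closure, Subgroup.coe_map]
    exact hfin.image c

theorem exists_mem_closure_dist_mul_le_of_chain (hm : IsPseudoMetric d)
    (hli : IsLeftInvariant d) {H : Subgroup G} {S : Set G} {B r : ℝ} (hB : 0 ≤ B) {x y : G}
    (hS : ∀ z ∈ S, quotDist d H x z ≤ B)
    (hxy : ReflTransGen (fun a b => b ∈ S ∧ d a b ≤ r) x y) :
    ∃ f ∈ Subgroup.closure {h ∈ H | d x (h * x) ≤ 2 * (B + 1) + r}, d (f * x) y ≤ B + 1 := by
  induction hxy with
  | refl => exact ⟨1, Subgroup.one_mem _, by rw [one_mul, hm.refl]; linarith⟩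
  | @tail b c _ hbc ih =>
    obtain ⟨f, hf, hfb⟩ := ih
    obtain ⟨g, hg, hgc⟩ :=
      exists_dist_mul_lt_of_quotDist_lt ((hS c hbc.1).trans_lt (lt_add_one B))
    have hfH : f ∈ H := (Subgroup.closure_le H).2 (fun _ h => h.1) hf
    have hstep : d x (f⁻¹ * g * x) ≤ 2 * (B + 1) + r := by
      rw [← hli f, ← mul_assoc, ← mul_assoc, mul_inv_cancel, one_mul]
      linarith [hm.triangle (f * x) b c, hm.triangle (f * x) c (g * x), hm.symm c (g * x)]
    refine ⟨g, ?_, hgc.le⟩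
    simpa using Subgroup.mul_mem _ hf
      (Subgroup.subset_closure ⟨H.mul_mem (H.inv_mem hfH) hg, hstep⟩)

theorem exists_dist_le_of_chain (hm : IsPseudoMetric d) (hli : IsLeftInvariant d)
    (hp : IsProper d) {B : ℝ} (hB : 0 ≤ B) (r : ℝ) :
    ∃ D, ∀ H : Subgroup G, (H : Set G).Finite → ∀ (S : Set G) (x y : G),
      (∀ z ∈ S, quotDist d H x z ≤ B) → ReflTransGen (fun a b => b ∈ S ∧ d a b ≤ r) x y →
        d x y ≤ D := by
  obtain ⟨D, hD⟩ := exists_forall_mem_closure_dist_mul_le hli hp (2 * (B + 1) + r)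
  refine ⟨D + (B + 1), fun H hH S x y hS hxy => ?_⟩
  obtain ⟨f, hf, hfy⟩ := exists_mem_closure_dist_mul_le_of_chain hm hli hB hS hxy
  have hfin : (Subgroup.closure {h ∈ H | d x (h * x) ≤ 2 * (B + 1) + r} : Set G).Finite :=
    hH.subset ((Subgroup.closure_le H).2 fun _ h => h.1)
  linarith [hm.triangle x (f * x) y, hD x _ (fun _ h => h.2) hfin f hf]

end Proper

abbrev FinSubgroup (G : Type) [Group G] : Type := {H : Subgroup G // (H : Set G).Finite}

abbrev finSubgroupFamily {G : Type} [Group G] (d : G → G → ℝ) : EquivMetricFamily where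
  idx := FinSubgroup G
  grp H := H.1
  spc _ := G
  dist _ x y := ENNReal.ofReal (d x y)
  act _ h x := (h : G) * x

structure InvariantPieces (G : Type) [Group G] where
  pieces : FinSubgroup G → Set (Set G)
  mul_mem : ∀ H, ∀ S ∈ pieces H, ∀ h ∈ H.1, ∀ x ∈ S, h * x ∈ S
  eq_of_mem : ∀ H, ∀ S ∈ pieces H, ∀ T ∈ pieces H, ∀ x ∈ S, x ∈ T → S = T

namespace InvariantPieces

variable {G : Type} [Group G]

noncomputable def quotFamily (C : InvariantPieces G) (d : G → G → ℝ) : MetricFamily where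
  idx := Σ H, C.pieces H
  spc q := q.2.1
  dist q x y := quotDist d q.1.1 x y

noncomputable def equivFamily (C : InvariantPieces G) (d : G → G → ℝ) : EquivMetricFamily :=
  (finSubgroupFamily d).subFam C.pieces

def univ : InvariantPieces G where
  pieces _ := {Set.univ}
  mul_mem := by rintro _ _ rfl; simp
  eq_of_mem _ _ hS _ hT _ _ _ := hS.trans hT.symm

variable {d : G → G → ℝ}

section

variable {C : InvariantPieces G} {H : FinSubgroup G}

theorem equivFamily_act_val (h : H.1) (x : (C.equivFamily d).spc H) :
    ((C.equivFamily d).act H h x).1 = h * x.1 := by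
  obtain ⟨S, hS, hx⟩ := x.2
  exact EquivMetricFamily.subFam_act_val ⟨S, hS, C.mul_mem H S hS h h.2 x.1 hx⟩

theorem equivFamily_dist_of_mem {x y : (C.equivFamily d).spc H} {S : Set G}
    (hS : S ∈ C.pieces H) (hx : x.1 ∈ S) (hy : y.1 ∈ S) :
    (C.equivFamily d).dist H x y = ENNReal.ofReal (d x.1 y.1) :=
  EquivMetricFamily.subFam_dist_of_mem hS hx hy

theorem exists_of_equivFamily_dist_le {x y : (C.equivFamily d).spc H} {r : ℝ≥0∞} (hr : r ≠ ⊤)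
    (h : (C.equivFamily d).dist H x y ≤ r) :
    ∃ S ∈ C.pieces H, x.1 ∈ S ∧ y.1 ∈ S ∧ d x.1 y.1 ≤ r.toReal := by
  by_cases hxy : ∃ S ∈ C.pieces H, x.1 ∈ S ∧ y.1 ∈ S
  · obtain ⟨S, hS, hx, hy⟩ := hxy
    refine ⟨S, hS, hx, hy, ?_⟩
    rwa [← ENNReal.ofReal_le_iff_le_toReal hr, ← equivFamily_dist_of_mem hS hx hy]
  · exact absurd (top_le_iff.1 ((EquivMetricFamily.subFam_dist_of_forall_not_mem
      (E := finSubgroupFamily d) (𝒰 := C.pieces) hxy).symm.trans_le h)) hr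

theorem equivFamily_dist_comm (hm : IsPseudoMetric d) (x y : (C.equivFamily d).spc H) :
    (C.equivFamily d).dist H x y = (C.equivFamily d).dist H y x := by
  by_cases hxy : ∃ S ∈ C.pieces H, x.1 ∈ S ∧ y.1 ∈ S
  · obtain ⟨S, hS, hx, hy⟩ := hxy
    rw [equivFamily_dist_of_mem hS hx hy, equivFamily_dist_of_mem hS hy hx, hm.symm]
  · have hyx : ¬∃ S ∈ C.pieces H, y.1 ∈ S ∧ x.1 ∈ S := fun ⟨S, hS, hy, hx⟩ => hxy ⟨S, hS, hx, hy⟩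
    exact (EquivMetricFamily.subFam_dist_of_forall_not_mem (E := finSubgroupFamily d) hxy).trans
      (EquivMetricFamily.subFam_dist_of_forall_not_mem (E := finSubgroupFamily d) hyx).symm

theorem equivFamily_dist_act (hli : IsLeftInvariant d) (h : H.1) (x y : (C.equivFamily d).spc H) :
    (C.equivFamily d).dist H ((C.equivFamily d).act H h x) ((C.equivFamily d).act H h y) =
      (C.equivFamily d).dist H x y := by
  have hmem : ∀ S ∈ C.pieces H, ∀ z : (C.equivFamily d).spc H,
      ((C.equivFamily d).act H h z).1 ∈ S ↔ z.1 ∈ S := fun S hS z => by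
    refine equivFamily_act_val h z ▸ ⟨fun hz => ?_, C.mul_mem H S hS h h.2 z.1⟩
    simpa using C.mul_mem H S hS h⁻¹ (inv_mem h.2) _ hz
  by_cases hxy : ∃ S ∈ C.pieces H, x.1 ∈ S ∧ y.1 ∈ S
  · obtain ⟨S, hS, hx, hy⟩ := hxy
    rw [equivFamily_dist_of_mem hS ((hmem S hS x).2 hx) ((hmem S hS y).2 hy),
      equivFamily_dist_of_mem hS hx hy, equivFamily_act_val, equivFamily_act_val, hli]
  · have hxy' : ¬∃ S ∈ C.pieces H, ((C.equivFamily d).act H h x).1 ∈ S ∧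
        ((C.equivFamily d).act H h y).1 ∈ S := fun ⟨S, hS, hx, hy⟩ =>
      hxy ⟨S, hS, (hmem S hS x).1 hx, (hmem S hS y).1 hy⟩
    exact (EquivMetricFamily.subFam_dist_of_forall_not_mem (E := finSubgroupFamily d) hxy').trans
      (EquivMetricFamily.subFam_dist_of_forall_not_mem (E := finSubgroupFamily d) hxy).symm

theorem equivFamily_act_bijective (h : H.1) :
    Function.Bijective ((C.equivFamily d).act H h) := by
  refine ⟨fun x y hxy => Subtype.ext ?_, fun y => ⟨(C.equivFamily d).act H (h⁻¹ : H.1) y, ?_⟩⟩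
  · simpa [equivFamily_act_val] using congrArg Subtype.val hxy
  · exact Subtype.ext (by simp [equivFamily_act_val])

theorem reflTransGen_val_of_equivFamily {r : ℝ≥0∞} (hr : r ≠ ⊤) {S : Set G}
    (hS : S ∈ C.pieces H) {x y : (C.equivFamily d).spc H} (hx : x.1 ∈ S)
    (hxy : ReflTransGen (fun a b => (C.equivFamily d).dist H a b ≤ r) x y) :
    ReflTransGen (fun a b => b ∈ S ∧ d a b ≤ r.toReal) x.1 y.1 ∧ y.1 ∈ S := by
  induction hxy with
  | refl => exact ⟨.refl, hx⟩
  | @tail b c _ hbc ih =>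
    obtain ⟨T, hT, hb, hc, hbc⟩ := exists_of_equivFamily_dist_le hr hbc
    obtain rfl := C.eq_of_mem H S hS T hT b.1 ih.2 hb
    exact ⟨ih.1.tail ⟨hc, hbc⟩, hc⟩

theorem equivFDCClass_one_of_bounded (hm : IsPseudoMetric d) (hli : IsLeftInvariant d)
    (hp : IsProper d) (hC : (C.quotFamily d).Bounded) : EquivFDCClass 1 (C.equivFamily d) := by
  refine (C.equivFamily d).equivFDCClass_one_of_chain_bounded (fun _ => equivFamily_dist_comm hm)
    (fun _ => equivFamily_dist_act hli) (fun _ => equivFamily_act_bijective) fun r _ hr => ?_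
  obtain ⟨B, hB⟩ := hC
  obtain ⟨D, hD⟩ := exists_dist_le_of_chain hm hli hp (le_max_right B 0) r.toReal
  refine ⟨ENNReal.ofReal D, ENNReal.ofReal_ne_top, fun (H : FinSubgroup G) x y hxy => ?_⟩
  obtain ⟨S, hS, hx⟩ := x.2
  obtain ⟨hchain, hy⟩ := reflTransGen_val_of_equivFamily hr hS hx hxy
  rw [equivFamily_dist_of_mem hS hx hy]
  exact ENNReal.ofReal_le_ofReal <| hD H.1 H.2 S x.1 y.1
    (fun z hz => (hB ⟨H, S, hS⟩ ⟨x.1, hx⟩ ⟨z, hz⟩).trans (le_max_left B 0)) hchain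

theorem image_act_preimage_val (D : InvariantPieces G) {A : Set G}
    (hA : A ∈ D.pieces H) (h : H.1) :
    (C.equivFamily d).act H h '' (Subtype.val ⁻¹' A) = Subtype.val ⁻¹' A := by
  ext z
  constructor
  · rintro ⟨x, hx, rfl⟩
    change ((C.equivFamily d).act H h x).1 ∈ A
    rw [equivFamily_act_val]
    exact D.mul_mem H A hA h h.2 x.1 hx
  · intro hz
    refine ⟨(C.equivFamily d).act H (h⁻¹ : H.1) z, ?_, Subtype.ext (by simp [equivFamily_act_val])⟩
    change ((C.equivFamily d).act H (h⁻¹ : H.1) z).1 ∈ A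
    rw [equivFamily_act_val]
    exact D.mul_mem H A hA _ (h⁻¹ : H.1).2 z.1 hz

end

section Saturate

variable (hm : IsPseudoMetric d) (hli : IsLeftInvariant d) (C : InvariantPieces G) {r : ℝ}
  (hr : 0 ≤ r) (𝒲 : ∀ q : (C.quotFamily d).idx, Set (Set ((C.quotFamily d).spc q)))
  (h𝒲 : ∀ q, RDisjointCollection ((C.quotFamily d).dist q) r (𝒲 q))

/-- A piece `T` of `H\S` is realized as a subset of `S`; `H * T` is its preimage in `S`. -/
def saturate : InvariantPieces G where
  pieces H := {A | ∃ S : C.pieces H, ∃ T ∈ 𝒲 ⟨H, S⟩, A = (H.1 : Set G) * (Subtype.val '' T)}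
  mul_mem := by
    rintro H _ ⟨S, T, hT, rfl⟩ h hh _ hx
    obtain ⟨h', hh', _, ⟨t, ht, rfl⟩, rfl⟩ := mem_mul.1 hx
    exact mem_mul.2 ⟨h * h', H.1.mul_mem hh hh', _, ⟨t, ht, rfl⟩, mul_assoc _ _ _⟩
  eq_of_mem := by
    rintro H _ ⟨S, T, hT, rfl⟩ _ ⟨S', T', hT', rfl⟩ _ hx hx'
    obtain ⟨h, hh, _, ⟨t, ht, rfl⟩, rfl⟩ := mem_mul.1 hx
    obtain ⟨h', hh', _, ⟨t', ht', rfl⟩, heq⟩ := mem_mul.1 hx'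
    obtain rfl : S = S' := Subtype.ext <| C.eq_of_mem H S S.2 S' S'.2 _
      (C.mul_mem H S S.2 h hh t t.2) (heq ▸ C.mul_mem H S' S'.2 h' hh' t' t'.2)
    obtain rfl : T = T' := by
      by_contra hne
      have h0 : quotDist d H.1 t t' = 0 := by
        rw [← quotDist_mul_mul hli hh hh', ← heq, quotDist_self hm]
      exact (h𝒲 _ T hT T' hT' hne t ht t' ht').not_ge (h0.trans_le hr)
    rfl

theorem saturate_subset :
    ∀ H, ∀ A ∈ (saturate hm hli C hr 𝒲 h𝒲).pieces H, ∃ S ∈ C.pieces H, A ⊆ S := by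
  rintro H _ ⟨S, T, hT, rfl⟩
  refine ⟨S, S.2, ?_⟩
  rintro _ ⟨h, hh, _, ⟨t, ht, rfl⟩, rfl⟩
  exact C.mul_mem H S S.2 h hh t t.2

theorem exists_mem_saturate {H : FinSubgroup G} {S : C.pieces H} {T} (hT : T ∈ 𝒲 ⟨H, S⟩)
    {t : S.1} (ht : t ∈ T) : ∃ A ∈ (saturate hm hli C hr 𝒲 h𝒲).pieces H, t.1 ∈ A :=
  ⟨_, ⟨S, T, hT, rfl⟩, mem_mul.2 ⟨1, H.1.one_mem, _, ⟨t, ht, rfl⟩, one_mul _⟩⟩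

theorem fdcClass_quotFamily_saturate {β : Ordinal} (h : FDCClass β ((C.quotFamily d).ofPieces 𝒲)) :
    FDCClass β ((saturate hm hli C hr 𝒲 h𝒲).quotFamily d) := by
  choose S T hT hA using fun q : ((saturate hm hli C hr 𝒲 h𝒲).quotFamily d).idx => q.2.2
  have hpt : ∀ q (a : ((saturate hm hli C hr 𝒲 h𝒲).quotFamily d).spc q),
      ∃ t ∈ T q, ∃ h ∈ q.1.1, a.1 = h * t.1 := fun q a => by
    have ha : a.1 ∈ (q.1.1 : Set G) * (Subtype.val '' T q) := hA q ▸ a.2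
    obtain ⟨h, hh, _, ⟨t, ht, rfl⟩, hat⟩ := mem_mul.1 ha
    exact ⟨t, ht, h, hh, hat.symm⟩
  choose t ht g hg hat using hpt
  refine h.comap (F₁ := (C.quotFamily d).ofPieces 𝒲) (fun q => ⟨⟨q.1, S q⟩, T q, hT q⟩)
    (fun q a => ⟨t q a, ht q a⟩) fun q a a' => ?_
  change quotDist d q.1.1 (t q a).1 (t q a').1 = quotDist d q.1.1 a.1 a'.1
  rw [hat q a, hat q a', quotDist_mul_mul hli (hg q a) (hg q a')]

theorem ofReal_le_dist_of_mem_saturate {H : FinSubgroup G} :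
    ∀ P ∈ preimage Subtype.val '' (saturate hm hli C hr 𝒲 h𝒲).pieces H,
    ∀ Q ∈ preimage Subtype.val '' (saturate hm hli C hr 𝒲 h𝒲).pieces H, P ≠ Q →
    ∀ x ∈ P, ∀ y ∈ Q, ENNReal.ofReal r ≤ (C.equivFamily d).dist H x y := by
  rintro _ ⟨_, ⟨S, T, hT, rfl⟩, rfl⟩ _ ⟨_, ⟨S', T', hT', rfl⟩, rfl⟩ hne x hx y hy
  obtain ⟨h, hh, _, ⟨t, ht, rfl⟩, hxt⟩ := mem_mul.1 hx
  obtain ⟨h', hh', _, ⟨t', ht', rfl⟩, hyt⟩ := mem_mul.1 hy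
  have hxS : x.1 ∈ S.1 := hxt ▸ C.mul_mem H S S.2 h hh t t.2
  have hyS : y.1 ∈ S'.1 := hyt ▸ C.mul_mem H S' S'.2 h' hh' t' t'.2
  by_cases hxy : ∃ S'' ∈ C.pieces H, x.1 ∈ S'' ∧ y.1 ∈ S''
  · obtain ⟨S'', hS'', hx'', hy''⟩ := hxy
    obtain rfl : S = S' := Subtype.ext ((C.eq_of_mem H _ S.2 _ hS'' _ hxS hx'').trans
      (C.eq_of_mem H _ hS'' _ S'.2 _ hy'' hyS))
    have hTT : T ≠ T' := by rintro rfl; exact hne rfl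
    have hquot : quotDist d H.1 t t' ≤ d x.1 y.1 := by
      rw [← quotDist_mul_mul hli hh hh', hxt, hyt]
      exact quotDist_le_s5 hm _ _
    rw [equivFamily_dist_of_mem S.2 hxS hyS]
    exact ENNReal.ofReal_le_ofReal ((h𝒲 _ T hT T' hT' hTT t ht t' ht').le.trans hquot)
  · exact le_top.trans_eq
      (EquivMetricFamily.subFam_dist_of_forall_not_mem (E := finSubgroupFamily d) hxy).symm

end Saturate

theorem decomposesOver_of_quotFamily {C : InvariantPieces G} (hm : IsPseudoMetric d)
    (hli : IsLeftInvariant d) {β δ : Ordinal} (hC : (C.quotFamily d).DecomposesOver (FDCClass β))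
    (ih : ∀ C' : InvariantPieces G, FDCClass β (C'.quotFamily d) →
      EquivFDCClass δ (C'.equivFamily d)) :
    (C.equivFamily d).DecomposesOver (EquivFDCClass δ) := by
  intro r hr hr'
  have hs : 0 ≤ r.toReal + 1 := by positivity
  have hrs : r < ENNReal.ofReal (r.toReal + 1) :=
    (ENNReal.lt_ofReal_iff_toReal_lt hr').2 (lt_add_one _)
  obtain ⟨𝒰, 𝒱, hcov, h𝒰, h𝒱, hF𝒰, hF𝒱⟩ := hC (r.toReal + 1) (by positivity)
  let U := saturate hm hli C hs 𝒰 h𝒰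
  let V := saturate hm hli C hs 𝒱 h𝒱
  refine ⟨fun H => preimage Subtype.val '' U.pieces H, fun H => preimage Subtype.val '' V.pieces H,
    fun H x => ?_, ?_, ?_,
    fun H P hP Q hQ hne x hx y hy => hrs.trans_le <|
      ofReal_le_dist_of_mem_saturate hm hli C hs 𝒰 h𝒰 P hP Q hQ hne x hx y hy,
    fun H P hP Q hQ hne x hx y hy => hrs.trans_le <|
      ofReal_le_dist_of_mem_saturate hm hli C hs 𝒱 h𝒱 P hP Q hQ hne x hx y hy,
    EquivFDCClass.comap (EquivMetricFamily.FiberIso.subFamSubFam (saturate_subset hm hli C hs 𝒰 h𝒰))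
      (ih U (fdcClass_quotFamily_saturate hm hli C hs 𝒰 h𝒰 hF𝒰)),
    EquivFDCClass.comap (EquivMetricFamily.FiberIso.subFamSubFam (saturate_subset hm hli C hs 𝒱 h𝒱))
      (ih V (fdcClass_quotFamily_saturate hm hli C hs 𝒱 h𝒱 hF𝒱))⟩
  · obtain ⟨S, hS, hx⟩ := x.2
    rcases hcov ⟨H, S, hS⟩ ⟨x.1, hx⟩ with ⟨T, hT, hxT⟩ | ⟨T, hT, hxT⟩
    · exact Or.inl (exists_mem_image_preimage_iff.2 (exists_mem_saturate hm hli C hs 𝒰 h𝒰 hT hxT))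
    · exact Or.inr (exists_mem_image_preimage_iff.2 (exists_mem_saturate hm hli C hs 𝒱 h𝒱 hT hxT))
  · rintro H h _ ⟨A, hA, rfl⟩
    exact ⟨A, hA, (image_act_preimage_val U hA h).symm⟩
  · rintro H h _ ⟨A, hA, rfl⟩
    exact ⟨A, hA, (image_act_preimage_val V hA h).symm⟩

theorem equivFDCClass_one_add (hm : IsPseudoMetric d) (hli : IsLeftInvariant d) (hp : IsProper d)
    (γ : Ordinal) : ∀ C : InvariantPieces G, FDCClass γ (C.quotFamily d) →
      EquivFDCClass (1 + γ) (C.equivFamily d) := by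
  induction γ using Ordinal.limitRecOn with
  | zero =>
    intro C h
    rw [add_zero]
    exact C.equivFDCClass_one_of_bounded hm hli hp ((fdcClass_zero _).1 h)
  | add_one β ih =>
    intro C h
    rw [← add_assoc, equivFDCClass_add_one]
    exact decomposesOver_of_quotFamily hm hli ((fdcClass_add_one _ _).1 h) ih
  | limit o ho ih =>
    intro C h
    obtain ⟨β, hβ, hC⟩ := (fdcClass_limit ho _).1 h
    exact (equivFDCClass_limit (Ordinal.isSuccLimit_add 1 ho) _).2
      ⟨1 + β, (add_lt_add_iff_left 1).2 hβ, ih β hβ C hC⟩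

end InvariantPieces

theorem equivariant_FDC_of_quotFamily_FDC_general
    (G : Type) [Group G] (d : G → G → ℝ)
    (hm : IsPseudoMetric d)
    (hli : IsLeftInvariant d) (hp : IsProper d)
    (hfdc : HasFDC (quotFamily G d)) :
    HasEquivFDC
      { idx := {H : Subgroup G // (H : Set G).Finite}
        grp := fun H => ↥H.1
        spc := fun _ => G
        dist := fun _ x y => ENNReal.ofReal (d x y)
        act := fun _ h x => (h : G) * x } := by
  obtain ⟨γ, hγ⟩ := hfdc
  have hγ' : FDCClass γ (InvariantPieces.univ.quotFamily d) :=
    hγ.comap (fun q => q.1) (fun _ x => x.1) fun _ _ _ => rfl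
  exact ⟨1 + γ, EquivFDCClass.comap
    (EquivMetricFamily.FiberIso.toSubFamUniv (finSubgroupFamily d))
    (InvariantPieces.univ.equivFDCClass_one_add hm hli hp γ hγ')⟩

/-- Let `G` be a group with a proper left-invariant metric such that the
metric family `{H\G}_{H ∈ Fin}` has finite decomposition complexity. Then the equivariant
metric family `{(G,H)}_{H ∈ Fin}`, where each finite subgroup `H` acts on `G` by left
multiplication, has equivariant finite decomposition complexity. -/
theorem equivariant_FDC_of_quotFamily_FDC
    (G : Type) [Group G] (d : G → G → ℝ)
    (hm : IsPseudoMetric d) (hsep : ∀ x y, d x y = 0 → x = y)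
    (hli : IsLeftInvariant d) (hp : IsProper d)
    (hfdc : HasFDC (quotFamily G d)) :
    HasEquivFDC
      { idx := {H : Subgroup G // (H : Set G).Finite}
        grp := fun H => ↥H.1
        spc := fun _ => G
        dist := fun _ x y => ENNReal.ofReal (d x y)
        act := fun _ h x => (h : G) * x } :=
  equivariant_FDC_of_quotFamily_FDC_general G d hm hli hp hfdc
end

section
/- Let G be a group equipped with a proper left-invariant metric. Then the family of all finite subgroups of G, each regarded as a metric subspace of G, has asymptotic dimension zero uniformly: for every R > 0 there exists s_R < ∞ such that every finite subgroup F of G admits an R-disjoint decomposition into subsets of diameter at most s_R (namely, the cosets of the subgroup of F generated by F ∩ B_R(e)). -/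
open Matrix

/-!
Any two points of a finite subgroup `F` at distance at most `R` differ by an element of
`F ∩ B_R(e)`, so they lie in the same left coset of `H = ⟨F ∩ B_R(e)⟩`; this gives
`R`-disjointness. By left invariance each coset is isometric to `H`, and `H` is one of the
finitely many finite subgroups generated by subsets of the finite ball `B_R(e)`, so the
diameters are bounded uniformly in `F`.
-/

open Subgroup
open scoped Pointwise

theorem exists_forall_le_of_mem_finite_closure {G β : Type*} [Group G] [Preorder β]
    [IsDirectedOrder β] [Nonempty β] {B : Set G} (hB : B.Finite) (f : G → G → β) :
    ∃ s, ∀ S ⊆ B, (closure S : Set G).Finite →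
      ∀ x ∈ closure S, ∀ y ∈ closure S, f x y ≤ s := by
  set 𝒮 := {S | S ⊆ B ∧ (closure S : Set G).Finite}
  set U := ⋃ S ∈ 𝒮, (closure S : Set G)
  have hU : U.Finite := (hB.finite_subsets.subset fun _ hS => hS.1).biUnion fun _ hS => hS.2
  obtain ⟨s, hs⟩ := (hU.image2 f hU).bddAbove
  have hsub : ∀ S ∈ 𝒮, (closure S : Set G) ⊆ U := fun S hS =>
    Set.subset_biUnion_of_mem (u := fun S => (closure S : Set G)) hS
  exact ⟨s, fun S hSB hS x hx y hy =>
    hs (Set.mem_image2_of_mem (hsub S ⟨hSB, hS⟩ hx) (hsub S ⟨hSB, hS⟩ hy))⟩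

theorem leftCoset_eq_of_mem {G : Type*} [Group G] {H : Subgroup G} {g x : G}
    (hx : x ∈ g • (H : Set G)) : g • (H : Set G) = x • H :=
  (leftCoset_eq_iff H).2 ((mem_leftCoset_iff g).1 hx)

section LeftInvariant

variable {G : Type} [Group G] {d : G → G → ℝ}

theorem IsLeftInvariant.eq_one_inv_mul (hli : IsLeftInvariant d) (x y : G) :
    d x y = d 1 (x⁻¹ * y) := by
  simpa using hli x 1 (x⁻¹ * y)

theorem IsLeftInvariant.inv_mul_mem_closure_inter_ball (hli : IsLeftInvariant d)
    {F : Subgroup G} {R : ℝ} {x y : G} (hx : x ∈ F) (hy : y ∈ F) (hxy : d x y ≤ R) :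
    x⁻¹ * y ∈ closure ((F : Set G) ∩ {z | d 1 z ≤ R}) :=
  subset_closure ⟨F.mul_mem (F.inv_mem hx) hy,
    by rwa [Set.mem_ofPred_eq, ← hli.eq_one_inv_mul]⟩

end LeftInvariant

theorem finite_subgroups_asdim_zero_uniformly_general
    (G : Type) [Group G] (d : G → G → ℝ)
    (hli : IsLeftInvariant d) (hp : IsProper d) :
    ∀ R : ℝ, 0 < R → ∃ s : ℝ, ∀ F : Subgroup G, (F : Set G).Finite →
      ∀ C : G → Set G,
        C = (fun g => (fun h => g * h) ''
              ((Subgroup.closure ((F : Set G) ∩ {x : G | d 1 x ≤ R}) : Subgroup G) : Set G)) →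
        (∀ x ∈ (F : Set G), ∃ g ∈ (F : Set G), x ∈ C g) ∧
        (∀ g ∈ (F : Set G), ∀ g' ∈ (F : Set G), C g ≠ C g' →
          ∀ x ∈ C g, ∀ y ∈ C g', R < d x y) ∧
        (∀ g ∈ (F : Set G), ∀ x ∈ C g, ∀ y ∈ C g, d x y ≤ s) := by
  intro R _
  obtain ⟨s, hs⟩ := exists_forall_le_of_mem_finite_closure (hp 1 R) d
  refine ⟨s, fun F hF C hC => ?_⟩
  -- `(fun h => g * h) '' H` is definitionally the coset `g • H`.
  subst hC
  set H := closure ((F : Set G) ∩ {x : G | d 1 x ≤ R})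
  have hHF : H ≤ F := (closure_le F).2 Set.inter_subset_left
  have hmemF : ∀ g ∈ (F : Set G), ∀ x ∈ g • (H : Set G), x ∈ F := by
    rintro g hg _ ⟨h, hh, rfl⟩
    exact F.mul_mem hg (hHF hh)
  refine ⟨fun x hx => ⟨x, hx, 1, H.one_mem, mul_one x⟩, ?_, ?_⟩
  · intro g hg g' hg' hne x hx y hy
    by_contra! hxy
    refine hne ?_
    calc g • (H : Set G) = x • H := leftCoset_eq_of_mem hx
      _ = y • H := (leftCoset_eq_iff H).2
          (hli.inv_mul_mem_closure_inter_ball (hmemF g hg x hx) (hmemF g' hg' y hy) hxy)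
      _ = g' • H := (leftCoset_eq_of_mem hy).symm
  · rintro g - _ ⟨x, hx, rfl⟩ _ ⟨y, hy, rfl⟩
    rw [hli]
    exact hs _ Set.inter_subset_right (hF.subset hHF) x hx y hy

/-- Let `G` be a group with a proper left-invariant metric. Then for
every `R > 0` there is `s` such that every finite subgroup `F` of `G` decomposes
`R`-disjointly into the cosets of the subgroup of `F` generated by `F ∩ B_R(e)`, each of
diameter at most `s`; in particular the family of finite subgroups of `G` has asymptotic
dimension zero uniformly. -/
theorem finite_subgroups_asdim_zero_uniformly
    (G : Type) [Group G] (d : G → G → ℝ)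
    (hm : IsPseudoMetric d) (hsep : ∀ x y, d x y = 0 → x = y)
    (hli : IsLeftInvariant d) (hp : IsProper d) :
    ∀ R : ℝ, 0 < R → ∃ s : ℝ, ∀ F : Subgroup G, (F : Set G).Finite →
      ∀ C : G → Set G,
        C = (fun g => (fun h => g * h) ''
              ((Subgroup.closure ((F : Set G) ∩ {x : G | d 1 x ≤ R}) : Subgroup G) : Set G)) →
        (∀ x ∈ (F : Set G), ∃ g ∈ (F : Set G), x ∈ C g) ∧
        (∀ g ∈ (F : Set G), ∀ g' ∈ (F : Set G), C g ≠ C g' →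
          ∀ x ∈ C g, ∀ y ∈ C g', R < d x y) ∧
        (∀ g ∈ (F : Set G), ∀ x ∈ C g, ∀ y ∈ C g, d x y ≤ s) :=
  finite_subgroups_asdim_zero_uniformly_general G d hli hp
end

section
/- Let {U_α ∪ V_α}_{α∈A} be a metric family where each member is a union of two subspaces. Then the uniform asymptotic dimension of {U_α ∪ V_α}_{α∈A} equals the maximum of the uniform asymptotic dimensions of the families {U_α}_{α∈A} and {V_α}_{α∈A}. -/
open Matrix

/-- The uniform asymptotic dimension of a metric family, as an extended natural number:
the least `n` such that the family has asymptotic dimension at most `n` uniformly. -/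
noncomputable def uniformAsdim {ι : Type} (X : ι → Type) (d : ∀ i, X i → X i → ℝ) : ℕ∞ :=
  sInf {n : ℕ∞ | ∃ m : ℕ, n = (m : ℕ∞) ∧ UniformAsdimLE X d m}

/-!
For `≥`, a cover of `U_α ∪ V_α` restricts to covers of `U_α` and of `V_α` with the same
disjointness and diameter bounds. For `≤` we follow Bell–Dranishnikov: fix `r`, cover the `U_α`
by `n + 1` families that are `r`-disjoint with diameters `≤ b`, and the `V_α` by `n + 1` families
that are `(2b + 3r)`-disjoint with diameters `≤ c`. In each colour, let every `V`-piece swallow the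
`U`-pieces within distance `r` of it. The enlarged pieces have diameter `≤ 2b + 2r + c` and stay
`r`-disjoint, and together with the untouched `U`-pieces they cover `U_α ∪ V_α`.
-/

section Covers

variable {X Y : Type} {d : X → X → ℝ} {r b c : ℝ}

theorem IsPseudoMetric.comap (hd : IsPseudoMetric d) (f : Y → X) :
    IsPseudoMetric (fun x y => d (f x) (f y)) where
  nonneg _ _ := hd.nonneg _ _
  refl _ := hd.refl _
  symm _ _ := hd.symm _ _
  triangle _ _ _ := hd.triangle _ _ _

def IsRDisjoint (d : X → X → ℝ) (r : ℝ) (𝒰 : Set (Set X)) : Prop :=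
  ∀ U ∈ 𝒰, ∀ V ∈ 𝒰, U ≠ V → ∀ x ∈ U, ∀ y ∈ V, r < d x y

def IsDiamLE (d : X → X → ℝ) (B : ℝ) (𝒰 : Set (Set X)) : Prop :=
  ∀ U ∈ 𝒰, ∀ x ∈ U, ∀ y ∈ U, d x y ≤ B

def IsAsdimCover {κ : Type} (d : X → X → ℝ) (r B : ℝ) (𝒰 : κ → Set (Set X)) : Prop :=
  (∀ x, ∃ k, ∃ U ∈ 𝒰 k, x ∈ U) ∧ (∀ k, IsRDisjoint d r (𝒰 k)) ∧ ∀ k, IsDiamLE d B (𝒰 k)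

theorem uniformAsdimLE_iff {ι : Type} {X : ι → Type} {d : ∀ i, X i → X i → ℝ} {n : ℕ} :
    UniformAsdimLE X d n ↔
      ∀ r : ℝ, 0 < r → ∃ B : ℝ, ∀ i, ∃ 𝒰 : Fin (n + 1) → Set (Set (X i)),
        IsAsdimCover (d i) r B 𝒰 :=
  Iff.rfl

theorem IsDiamLE.mono {𝒰 : Set (Set X)} {B B' : ℝ} (h : IsDiamLE d B 𝒰) (hB : B ≤ B') :
    IsDiamLE d B' 𝒰 :=
  fun U hU x hx y hy => (h U hU x hx y hy).trans hB

theorem IsRDisjoint.image {𝒰 : Set (Set Y)} (f : Y → X)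
    (h : IsRDisjoint (fun x y => d (f x) (f y)) r 𝒰) : IsRDisjoint d r (Set.image f '' 𝒰) := by
  rintro _ ⟨U, hU, rfl⟩ _ ⟨V, hV, rfl⟩ hne _ ⟨x, hx, rfl⟩ _ ⟨y, hy, rfl⟩
  exact h U hU V hV (by rintro rfl; exact hne rfl) x hx y hy

theorem IsDiamLE.image {𝒰 : Set (Set Y)} (f : Y → X)
    (h : IsDiamLE (fun x y => d (f x) (f y)) b 𝒰) : IsDiamLE d b (Set.image f '' 𝒰) := by
  rintro _ ⟨U, hU, rfl⟩ _ ⟨x, hx, rfl⟩ _ ⟨y, hy, rfl⟩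
  exact h U hU x hx y hy

theorem IsAsdimCover.preimage {κ : Type} {𝒰 : κ → Set (Set X)} (h : IsAsdimCover d r b 𝒰)
    (f : Y → X) :
    IsAsdimCover (fun x y => d (f x) (f y)) r b (fun k => Set.preimage f '' 𝒰 k) := by
  obtain ⟨hcover, hdisj, hdiam⟩ := h
  refine ⟨fun x => ?_, fun k => ?_, fun k => ?_⟩
  · obtain ⟨k, U, hU, hx⟩ := hcover (f x)
    exact ⟨k, _, ⟨U, hU, rfl⟩, hx⟩
  · rintro _ ⟨U, hU, rfl⟩ _ ⟨V, hV, rfl⟩ hne x hx y hy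
    exact hdisj k U hU V hV (by rintro rfl; exact hne rfl) _ hx _ hy
  · rintro _ ⟨U, hU, rfl⟩ x hx y hy
    exact hdiam k U hU _ hx _ hy

theorem IsAsdimCover.comp {κ κ' : Type} {𝒰 : κ → Set (Set X)} (h : IsAsdimCover d r b 𝒰)
    {g : κ' → κ} (hg : Function.Surjective g) : IsAsdimCover d r b (𝒰 ∘ g) := by
  obtain ⟨hcover, hdisj, hdiam⟩ := h
  refine ⟨fun x => ?_, fun k => hdisj (g k), fun k => hdiam (g k)⟩
  obtain ⟨k, U, hU, hx⟩ := hcover x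
  obtain ⟨k', rfl⟩ := hg k
  exact ⟨k', U, hU, hx⟩

section Saturation

def IsNear (d : X → X → ℝ) (r : ℝ) (P Q : Set X) : Prop :=
  ∃ x ∈ P, ∃ y ∈ Q, d x y ≤ r

/-- The `r`-saturated union `Q ∪_r 𝒰` of Bell–Dranishnikov. -/
def saturate (d : X → X → ℝ) (r : ℝ) (𝒰 : Set (Set X)) (Q : Set X) : Set X :=
  Q ∪ ⋃₀ {P ∈ 𝒰 | IsNear d r P Q}

def saturatedFamily (d : X → X → ℝ) (r : ℝ) (𝒰 𝒱 : Set (Set X)) : Set (Set X) :=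
  saturate d r 𝒰 '' 𝒱 ∪ {P ∈ 𝒰 | ∀ Q ∈ 𝒱, ¬ IsNear d r P Q}

variable {𝒰 𝒱 : Set (Set X)}

theorem subset_sUnion_saturatedFamily :
    ⋃₀ 𝒰 ∪ ⋃₀ 𝒱 ⊆ ⋃₀ saturatedFamily d r 𝒰 𝒱 := by
  rintro x (⟨P, hP, hx⟩ | ⟨Q, hQ, hx⟩)
  · by_cases hnear : ∃ Q ∈ 𝒱, IsNear d r P Q
    · obtain ⟨Q, hQ, hPQ⟩ := hnear
      exact ⟨saturate d r 𝒰 Q, Or.inl ⟨Q, hQ, rfl⟩, Or.inr ⟨P, ⟨hP, hPQ⟩, hx⟩⟩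
    · push Not at hnear
      exact ⟨P, Or.inr ⟨hP, hnear⟩, hx⟩
  · exact ⟨saturate d r 𝒰 Q, Or.inl ⟨Q, hQ, rfl⟩, Or.inl hx⟩

variable (hd : IsPseudoMetric d)
include hd

theorem exists_dist_le_of_mem_saturate (h𝒰 : IsDiamLE d b 𝒰) (hbr : 0 ≤ b + r) {Q : Set X}
    {x : X} (hx : x ∈ saturate d r 𝒰 Q) : ∃ v ∈ Q, d x v ≤ b + r := by
  rcases hx with hx | ⟨P, ⟨hP, u, hu, v, hv, huv⟩, hxP⟩
  · exact ⟨x, hx, by rw [hd.refl]; exact hbr⟩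
  · exact ⟨v, hv, by linarith [h𝒰 P hP x hxP u hu, hd.triangle x u v]⟩

theorem lt_dist_of_mem_saturate_of_not_isNear (h𝒰 : IsRDisjoint d r 𝒰) {Q P : Set X}
    (hQ : Q ∈ 𝒱) (hP : P ∈ 𝒰) (hfar : ∀ Q ∈ 𝒱, ¬ IsNear d r P Q) {x y : X}
    (hx : x ∈ saturate d r 𝒰 Q) (hy : y ∈ P) : r < d x y := by
  rcases hx with hx | ⟨P', ⟨hP', hnear⟩, hxP'⟩
  · by_contra! hxy
    exact hfar Q hQ ⟨y, hy, x, hx, by rwa [hd.symm]⟩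
  · exact h𝒰 P' hP' P hP (by rintro rfl; exact hfar Q hQ hnear) x hxP' y hy

/-- Saturated sets stay within `b + r` of their cores; hence the scale `2b + 3r` for `𝒱`. -/
theorem lt_dist_of_mem_saturate_of_ne (h𝒰 : IsDiamLE d b 𝒰) (hbr : 0 ≤ b + r)
    (h𝒱 : IsRDisjoint d (2 * b + 3 * r) 𝒱) {Q₁ Q₂ : Set X} (hQ₁ : Q₁ ∈ 𝒱) (hQ₂ : Q₂ ∈ 𝒱)
    (hne : Q₁ ≠ Q₂) {x y : X} (hx : x ∈ saturate d r 𝒰 Q₁) (hy : y ∈ saturate d r 𝒰 Q₂) :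
    r < d x y := by
  obtain ⟨v₁, hv₁, hxv₁⟩ := exists_dist_le_of_mem_saturate hd h𝒰 hbr hx
  obtain ⟨v₂, hv₂, hyv₂⟩ := exists_dist_le_of_mem_saturate hd h𝒰 hbr hy
  have hv := h𝒱 Q₁ hQ₁ Q₂ hQ₂ hne v₁ hv₁ v₂ hv₂
  calc r = 2 * b + 3 * r - 2 * (b + r) := by ring
    _ < d v₁ v₂ - d x v₁ - d y v₂ := by linarith [hd.symm v₁ x]
    _ ≤ d x y := by linarith [hd.triangle v₁ x v₂, hd.triangle x y v₂, hd.symm v₁ x]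

theorem isRDisjoint_saturatedFamily (h𝒰 : IsRDisjoint d r 𝒰) (h𝒰b : IsDiamLE d b 𝒰)
    (hbr : 0 ≤ b + r) (h𝒱 : IsRDisjoint d (2 * b + 3 * r) 𝒱) :
    IsRDisjoint d r (saturatedFamily d r 𝒰 𝒱) := by
  rintro _ (⟨Q₁, hQ₁, rfl⟩ | ⟨hP₁, hfar₁⟩) _ (⟨Q₂, hQ₂, rfl⟩ | ⟨hP₂, hfar₂⟩) hne x hx y hy
  · exact lt_dist_of_mem_saturate_of_ne hd h𝒰b hbr h𝒱 hQ₁ hQ₂ (by rintro rfl; exact hne rfl) hx hy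
  · exact lt_dist_of_mem_saturate_of_not_isNear hd h𝒰 hQ₁ hP₂ hfar₂ hx hy
  · rw [hd.symm]
    exact lt_dist_of_mem_saturate_of_not_isNear hd h𝒰 hQ₂ hP₁ hfar₁ hy hx
  · exact h𝒰 _ hP₁ _ hP₂ hne x hx y hy

theorem isDiamLE_saturatedFamily (h𝒰 : IsDiamLE d b 𝒰) (hbr : 0 ≤ b + r)
    (h𝒱 : IsDiamLE d c 𝒱) : IsDiamLE d (max b (2 * b + 2 * r + c)) (saturatedFamily d r 𝒰 𝒱) := by
  rintro _ (⟨Q, hQ, rfl⟩ | ⟨hP, -⟩) x hx y hy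
  · obtain ⟨v₁, hv₁, hxv₁⟩ := exists_dist_le_of_mem_saturate hd h𝒰 hbr hx
    obtain ⟨v₂, hv₂, hyv₂⟩ := exists_dist_le_of_mem_saturate hd h𝒰 hbr hy
    calc d x y ≤ d x v₁ + d v₁ v₂ + d y v₂ := by
          linarith [hd.triangle x v₁ y, hd.triangle v₁ v₂ y, hd.symm v₂ y]
      _ ≤ 2 * b + 2 * r + c := by linarith [h𝒱 Q hQ v₁ hv₁ v₂ hv₂]
      _ ≤ _ := le_max_right _ _
  · exact (h𝒰 _ hP x hx y hy).trans (le_max_left _ _)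

end Saturation

end Covers

section Family

variable {ι : Type} {X Y : ι → Type} {d : ∀ i, X i → X i → ℝ} {m n : ℕ}

theorem UniformAsdimLE.mono (h : UniformAsdimLE X d m) (hmn : m ≤ n) : UniformAsdimLE X d n := by
  have hclamp : Function.Surjective (fun k : Fin (n + 1) => Fin.clamp k m) := fun j =>
    ⟨Fin.castLE (by omega) j, Fin.ext (by simp only [Fin.clamp, Fin.val_castLE]; omega)⟩
  rw [uniformAsdimLE_iff] at h ⊢
  intro r hr
  obtain ⟨B, hB⟩ := h r hr
  refine ⟨B, fun i => ?_⟩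
  obtain ⟨𝒰, h𝒰⟩ := hB i
  exact ⟨_, h𝒰.comp hclamp⟩

theorem UniformAsdimLE.comap (h : UniformAsdimLE X d n) (f : ∀ i, Y i → X i) :
    UniformAsdimLE Y (fun i x y => d i (f i x) (f i y)) n := by
  rw [uniformAsdimLE_iff] at h ⊢
  intro r hr
  obtain ⟨B, hB⟩ := h r hr
  refine ⟨B, fun i => ?_⟩
  obtain ⟨𝒰, h𝒰⟩ := hB i
  exact ⟨_, h𝒰.preimage (f i)⟩

theorem uniformAsdim_le_natCast_iff : uniformAsdim X d ≤ n ↔ UniformAsdimLE X d n := by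
  refine ⟨fun h => ?_, fun h => sInf_le ⟨n, rfl, h⟩⟩
  have hne : {k : ℕ∞ | ∃ m : ℕ, k = m ∧ UniformAsdimLE X d m}.Nonempty := by
    by_contra hempty
    rw [uniformAsdim, Set.not_nonempty_iff_eq_empty.1 hempty, sInf_empty] at h
    exact ENat.natCast_ne_top n (top_le_iff.1 h)
  obtain ⟨m, hm, hm'⟩ := csInf_mem hne
  rw [uniformAsdim, hm, Nat.cast_le] at h
  exact hm'.mono h

end Family

section Union

variable {A : Type} {Z : A → Type} {dZ : ∀ a, Z a → Z a → ℝ} {U V : ∀ a, Set (Z a)} {n : ℕ}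

theorem UniformAsdimLE.union (hZ : ∀ a, IsPseudoMetric (dZ a))
    (hU : UniformAsdimLE (fun a => ↥(U a)) (fun a x y => dZ a x.1 y.1) n)
    (hV : UniformAsdimLE (fun a => ↥(V a)) (fun a x y => dZ a x.1 y.1) n) :
    UniformAsdimLE (fun a => ↥(U a ∪ V a)) (fun a x y => dZ a x.1 y.1) n := by
  intro r hr
  obtain ⟨B, hB⟩ := hU r hr
  obtain ⟨b, hBb, hb⟩ : ∃ b, B ≤ b ∧ 0 ≤ b := ⟨max B 0, le_max_left _ _, le_max_right _ _⟩
  obtain ⟨c, hc⟩ := hV (2 * b + 3 * r) (by positivity)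
  refine ⟨max b (2 * b + 2 * r + c), fun a => ?_⟩
  obtain ⟨𝒰, hU_cover, hU_disj, hU_diam⟩ := hB a
  obtain ⟨𝒱, hV_cover, hV_disj, hV_diam⟩ := hc a
  set d : ↥(U a ∪ V a) → ↥(U a ∪ V a) → ℝ := fun x y => dZ a x.1 y.1
  have hd : IsPseudoMetric d := (hZ a).comap Subtype.val
  set ιU : ↥(U a) → ↥(U a ∪ V a) := Set.inclusion Set.subset_union_left
  set ιV : ↥(V a) → ↥(U a ∪ V a) := Set.inclusion Set.subset_union_right
  have hbr : 0 ≤ b + r := by positivity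
  have hUdiam_image k : IsDiamLE d b (Set.image ιU '' 𝒰 k) :=
    (IsDiamLE.image (d := d) ιU (hU_diam k)).mono hBb
  refine ⟨fun k => saturatedFamily d r (Set.image ιU '' 𝒰 k) (Set.image ιV '' 𝒱 k),
    fun x => ?_, fun k => ?_, fun k => ?_⟩
  · have hx : ∃ k, x ∈ ⋃₀ (Set.image ιU '' 𝒰 k) ∪ ⋃₀ (Set.image ιV '' 𝒱 k) := by
      obtain ⟨z, hz | hz⟩ := x
      · obtain ⟨k, S, hS, hzS⟩ := hU_cover ⟨z, hz⟩
        exact ⟨k, Or.inl ⟨_, ⟨S, hS, rfl⟩, ⟨_, hzS, rfl⟩⟩⟩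
      · obtain ⟨k, S, hS, hzS⟩ := hV_cover ⟨z, hz⟩
        exact ⟨k, Or.inr ⟨_, ⟨S, hS, rfl⟩, ⟨_, hzS, rfl⟩⟩⟩
    obtain ⟨k, hk⟩ := hx
    obtain ⟨W, hW, hxW⟩ := subset_sUnion_saturatedFamily hk
    exact ⟨k, W, hW, hxW⟩
  · exact isRDisjoint_saturatedFamily hd (IsRDisjoint.image (d := d) ιU (hU_disj k))
      (hUdiam_image k) hbr (IsRDisjoint.image (d := d) ιV (hV_disj k))
  · exact isDiamLE_saturatedFamily hd (hUdiam_image k) hbr (IsDiamLE.image (d := d) ιV (hV_diam k))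

theorem uniformAsdimLE_union_iff (hZ : ∀ a, IsPseudoMetric (dZ a)) :
    UniformAsdimLE (fun a => ↥(U a ∪ V a)) (fun a x y => dZ a x.1 y.1) n ↔
      UniformAsdimLE (fun a => ↥(U a)) (fun a x y => dZ a x.1 y.1) n ∧
        UniformAsdimLE (fun a => ↥(V a)) (fun a x y => dZ a x.1 y.1) n :=
  ⟨fun h => ⟨h.comap fun _ => Set.inclusion Set.subset_union_left,
      h.comap fun _ => Set.inclusion Set.subset_union_right⟩,
    fun ⟨hU, hV⟩ => hU.union hZ hV⟩

end Union

/-- For a metric family `{U_α ∪ V_α}_{α ∈ A}` whose members are unions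
of two subspaces, the uniform asymptotic dimension of `{U_α ∪ V_α}` equals the maximum of
the uniform asymptotic dimensions of `{U_α}` and `{V_α}`. -/
theorem uniformAsdim_union_eq_max
    (A : Type) (Z : A → Type) (dZ : ∀ a, Z a → Z a → ℝ)
    (hZ : ∀ a, IsPseudoMetric (dZ a)) (U V : ∀ a, Set (Z a)) :
    uniformAsdim (fun a => ↥(U a ∪ V a)) (fun a x y => dZ a x.1 y.1) =
      max (uniformAsdim (fun a => ↥(U a)) (fun a x y => dZ a x.1 y.1))
        (uniformAsdim (fun a => ↥(V a)) (fun a x y => dZ a x.1 y.1)) := by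
  refine WithTop.eq_of_forall_le_coe_iff fun n => ?_
  change _ ≤ (n : ℕ∞) ↔ max _ _ ≤ (n : ℕ∞)
  rw [max_le_iff, uniformAsdim_le_natCast_iff, uniformAsdim_le_natCast_iff,
    uniformAsdim_le_natCast_iff]
  exact uniformAsdimLE_union_iff hZ
end
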